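/- arXiv:1410.8479 — 11 statements merged into one kernel-verified Lean document; each statement's English description precedes it below -/
import Mathlib

section
/- Let H be a real Hilbert space, let f : H → ℝ be convex and continuous, let γ > 0, and set f_γ := γ·f + (1/2)‖·‖². Let p : H → H be such that for every y ∈ H, p(y) is a minimizer of x ↦ γ·f(x) + (1/2)‖x − y‖² (i.e., p is the proximal operator prox_{γf}). Define the convex conjugate F(y) := sup_{x ∈ H} ( ⟨y, x⟩ − f_γ(x) ). Then for every y ∈ H the supremum is attained at p(y), i.e. F(y) = ⟨y, p(y)⟩ − f_γ(p(y)), and F is differentiable at y with gradient p(y); that is, prox_{γf}(y) = ∇f_γ*(y). -/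
/-!
For convex `g`, the prox point `q` of `y` is characterised by the variational inequality
`g q ≤ g x + ⟪q - y, x - q⟫`; adding two instances of it shows that `prox_g` is firmly
nonexpansive, in particular `1`-Lipschitz. Expanding `½‖x - y‖²` turns minimising
`g x + ½‖x - y‖²` into maximising `⟪y, x⟫ - (g x + ½‖x‖²)`, so the conjugate `F` is the
supremum of affine functions of `y` attained at `prox_g y`. Comparing the affine minorants at
`y` and `z` squeezes `F z - F y - ⟪prox_g y, z - y⟫` between `0` and
`‖z - y‖ ‖prox_g z - prox_g y‖`, which is `o(‖z - y‖)` by continuity of `prox_g`.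
-/

open scoped RealInnerProductSpace
open Filter Topology

section

variable {H : Type*} [NormedAddCommGroup H] [InnerProductSpace ℝ H]

def IsProxPoint (g : H → ℝ) (y q : H) : Prop :=
  ∀ x, g q + (1 / 2) * ‖q - y‖ ^ 2 ≤ g x + (1 / 2) * ‖x - y‖ ^ 2

namespace IsProxPoint

variable {g : H → ℝ} {y z q q' : H}

theorem le_add_inner (hg : ConvexOn ℝ Set.univ g) (hq : IsProxPoint g y q) (x : H) :
    g q ≤ g x + ⟪q - y, x - q⟫ := by
  have hsegment : ∀ t ∈ Set.Ioc (0 : ℝ) 1,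
      g q ≤ g x + ⟪q - y, x - q⟫ + t / 2 * ‖x - q‖ ^ 2 := by
    rintro t ⟨ht0, ht1⟩
    have hconv : g (q + t • (x - q)) ≤ (1 - t) * g q + t * g x := by
      have := hg.2 (Set.mem_univ q) (Set.mem_univ x) (sub_nonneg.2 ht1) ht0.le (by ring)
      rwa [show q + t • (x - q) = (1 - t) • q + t • x by module]
    have hexpand : ‖q + t • (x - q) - y‖ ^ 2
        = ‖q - y‖ ^ 2 + 2 * t * ⟪q - y, x - q⟫ + t ^ 2 * ‖x - q‖ ^ 2 := by
      rw [add_sub_right_comm, norm_add_sq_real, real_inner_smul_right, norm_smul,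
        Real.norm_of_nonneg ht0.le]
      ring
    have hmin := hq (q + t • (x - q))
    rw [hexpand] at hmin
    have : t * g q ≤ t * (g x + ⟪q - y, x - q⟫ + t / 2 * ‖x - q‖ ^ 2) := by nlinarith
    exact le_of_mul_le_mul_left this ht0
  have hlim : Tendsto (fun t : ℝ => g x + ⟪q - y, x - q⟫ + t / 2 * ‖x - q‖ ^ 2)
      (𝓝[>] 0) (𝓝 (g x + ⟪q - y, x - q⟫)) := by
    have hcont : Continuous fun t : ℝ => g x + ⟪q - y, x - q⟫ + t / 2 * ‖x - q‖ ^ 2 := by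
      fun_prop
    simpa using (hcont.tendsto 0).mono_left nhdsWithin_le_nhds
  exact ge_of_tendsto hlim (eventually_of_mem (Ioc_mem_nhdsGT zero_lt_one) hsegment)

theorem norm_sub_sq_le_inner (hg : ConvexOn ℝ Set.univ g) (hq : IsProxPoint g y q)
    (hq' : IsProxPoint g z q') : ‖q' - q‖ ^ 2 ≤ ⟪z - y, q' - q⟫ := by
  have h := hq.le_add_inner hg q'
  have h' := hq'.le_add_inner hg q
  have hsum : ⟪q - y, q' - q⟫ + ⟪q' - z, q - q'⟫ = ⟪z - y, q' - q⟫ - ‖q' - q‖ ^ 2 := by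
    rw [← real_inner_self_eq_norm_sq, ← neg_sub q' q, inner_neg_right, ← sub_eq_add_neg,
      ← inner_sub_left, ← inner_sub_left]
    congr 1
    abel
  linarith

theorem norm_sub_le (hg : ConvexOn ℝ Set.univ g) (hq : IsProxPoint g y q)
    (hq' : IsProxPoint g z q') : ‖q' - q‖ ≤ ‖z - y‖ := by
  have h : ‖q' - q‖ * ‖q' - q‖ ≤ ‖z - y‖ * ‖q' - q‖ := by
    rw [← sq]
    exact (hq.norm_sub_sq_le_inner hg hq').trans (real_inner_le_norm _ _)
  rcases (norm_nonneg (q' - q)).eq_or_lt with h0 | h0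
  · rw [← h0]
    exact norm_nonneg _
  · exact le_of_mul_le_mul_right h h0

theorem inner_sub_le (hq : IsProxPoint g y q) (x : H) :
    ⟪y, x⟫ - (g x + (1 / 2) * ‖x‖ ^ 2) ≤ ⟪y, q⟫ - (g q + (1 / 2) * ‖q‖ ^ 2) := by
  have h := hq x
  rw [norm_sub_sq_real, norm_sub_sq_real, real_inner_comm y x, real_inner_comm y q] at h
  linarith

end IsProxPoint

theorem lipschitzWith_one_of_isProxPoint {g : H → ℝ} (hg : ConvexOn ℝ Set.univ g) {p : H → H}
    (hp : ∀ y, IsProxPoint g y (p y)) : LipschitzWith 1 p :=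
  LipschitzWith.mk_one fun z y => by
    simpa only [dist_eq_norm] using (hp y).norm_sub_le hg (hp z)

theorem ciSup_inner_sub_eq {φ : H → ℝ} {y q : H} (hq : ∀ x, ⟪y, x⟫ - φ x ≤ ⟪y, q⟫ - φ q) :
    ⨆ x, (⟪y, x⟫ - φ x) = ⟪y, q⟫ - φ q :=
  le_antisymm (ciSup_le hq) (le_ciSup_of_le ⟨_, Set.forall_mem_range.2 hq⟩ q le_rfl)

theorem hasGradientAt_inner_sub_of_forall_le [CompleteSpace H] {φ : H → ℝ} {p : H → H} {y : H}
    (hmax : ∀ z x, ⟪z, x⟫ - φ x ≤ ⟪z, p z⟫ - φ (p z)) (hp : ContinuousAt p y) :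
    HasGradientAt (fun z => ⟪z, p z⟫ - φ (p z)) (p y) y := by
  rw [hasGradientAt_iff_isLittleO, Asymptotics.isLittleO_iff]
  intro c hc
  have hclose : ∀ᶠ z in 𝓝 y, ‖p z - p y‖ ≤ c := by
    filter_upwards [hp.eventually (Metric.closedBall_mem_nhds _ hc)] with z hz
    simpa only [Metric.mem_closedBall, dist_eq_norm] using hz
  filter_upwards [hclose] with z hz
  have hlower := hmax z (p y)
  have hupper := hmax y (p z)
  have hinner : ⟪z - y, p z - p y⟫ ≤ ‖z - y‖ * c :=
    (real_inner_le_norm _ _).trans (mul_le_mul_of_nonneg_left hz (norm_nonneg _))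
  simp only [inner_sub_left, inner_sub_right] at hinner ⊢
  rw [real_inner_comm z (p y), real_inner_comm y (p y), Real.norm_eq_abs, abs_le]
  constructor <;> linarith [mul_nonneg hc.le (norm_nonneg (z - y))]

end

theorem prox_eq_gradient_conjugate_general
    {H : Type*} [NormedAddCommGroup H] [InnerProductSpace ℝ H] [CompleteSpace H]
    (f : H → ℝ) (hf_conv : ConvexOn ℝ Set.univ f)
    (γ : ℝ) (hγ : 0 < γ)
    (fγ : H → ℝ) (hfγ : fγ = fun x => γ * f x + (1 / 2) * ‖x‖ ^ 2)
    (p : H → H)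
    (hp : ∀ y x, γ * f (p y) + (1 / 2) * ‖p y - y‖ ^ 2 ≤ γ * f x + (1 / 2) * ‖x - y‖ ^ 2)
    (F : H → ℝ) (hF : F = fun y => ⨆ x : H, (⟪y, x⟫ - fγ x)) :
    ∀ y : H, F y = ⟪y, p y⟫ - fγ (p y) ∧ HasGradientAt F (p y) y := by
  have hprox : ∀ y, IsProxPoint (fun x => γ * f x) y (p y) := hp
  have hconv : ConvexOn ℝ Set.univ fun x => γ * f x := hf_conv.smul hγ.le
  have hmax : ∀ y x, ⟪y, x⟫ - fγ x ≤ ⟪y, p y⟫ - fγ (p y) := by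
    subst hfγ
    exact fun y => (hprox y).inner_sub_le
  have hF_eq : F = fun y => ⟪y, p y⟫ - fγ (p y) := by
    subst hF
    exact funext fun y => ciSup_inner_sub_eq (hmax y)
  subst hF_eq
  exact fun y => ⟨rfl, hasGradientAt_inner_sub_of_forall_le hmax
    ((lipschitzWith_one_of_isProxPoint hconv hprox).continuous.continuousAt)⟩

/-- The proximal operator is the gradient of the conjugate of
`f_γ := γ·f + (1/2)‖·‖²`: the supremum defining the conjugate is attained at
`prox_{γf}(y)` and the conjugate is differentiable at `y` with gradient `prox_{γf}(y)`. -/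
theorem prox_eq_gradient_conjugate
    {H : Type*} [NormedAddCommGroup H] [InnerProductSpace ℝ H] [CompleteSpace H]
    (f : H → ℝ) (hf_conv : ConvexOn ℝ Set.univ f) (hf_cont : Continuous f)
    (γ : ℝ) (hγ : 0 < γ)
    (fγ : H → ℝ) (hfγ : fγ = fun x => γ * f x + (1 / 2) * ‖x‖ ^ 2)
    (p : H → H)
    (hp : ∀ y x, γ * f (p y) + (1 / 2) * ‖p y - y‖ ^ 2 ≤ γ * f x + (1 / 2) * ‖x - y‖ ^ 2)
    (F : H → ℝ) (hF : F = fun y => ⨆ x : H, (⟪y, x⟫ - fγ x)) :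
    ∀ y : H, F y = ⟪y, p y⟫ - fγ (p y) ∧ HasGradientAt F (p y) y :=
  prox_eq_gradient_conjugate_general f hf_conv γ hγ fγ hfγ p hp F hF
end

section
/- Let H be a real Hilbert space, let γ > 0 and β ≥ σ > 0, and let f : H → ℝ be differentiable, σ-strongly convex and β-smooth. Let p : H → H be the proximal operator prox_{γf}, and define T := p − (1/(1+γβ))·Id. Then for all x, y ∈ H: (1/(1+γσ) − 1/(1+γβ))·⟨T(x) − T(y), x − y⟩ ≥ ‖T(x) − T(y)‖². In particular, if β > σ then T is cocoercive with constant 1/(1/(1+γσ) − 1/(1+γβ)), and if β = σ then T is 0-Lipschitz (i.e. T(x) = T(y) for all x, y, so prox_{γf} − (1/(1+γβ))·Id is constant). -/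
/-!
Minimality of `p y` against the quadratic upper bound on `f` gives the resolvent identity
`p y + γ ∇f(p y) = y`. Hence `T = γ/(1+γβ) · (β·id − ∇f) ∘ p` and
`κ·id − T = γ/(1+γσ) · (∇f − σ·id) ∘ p` with `κ = 1/(1+γσ) − 1/(1+γβ)`, so
`κ⟪ΔT, Δx⟫ − ‖ΔT‖² = ⟪ΔT, Δ(κ·id − T)⟫` is a positive multiple of
`⟪Δ(∇f − σ·id), Δ(β·id − ∇f)⟫ ≥ 0`. The last inequality is the Baillon–Haddad theorem for
the convex, `(β − σ)`-smooth function `f − σ/2‖·‖²`.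
-/

open scoped RealInnerProductSpace

section

variable {H : Type*} [NormedAddCommGroup H] [InnerProductSpace ℝ H]

/-- Moving from `v` along `d = v + γ ∇f(v) − y`, the objective grows at most like
`t‖d‖² + O(t²)`, so minimality forces `d = 0`. -/
theorem add_smul_eq_of_forall_prox_objective_le {γ β : ℝ} {f : H → ℝ} {f' : H → H}
    (hγ : 0 ≤ γ) (hsm : ∀ x y, f x ≤ f y + ⟪f' y, x - y⟫ + β / 2 * ‖x - y‖ ^ 2) {v y : H}
    (hv : ∀ x, γ * f v + 1 / 2 * ‖v - y‖ ^ 2 ≤ γ * f x + 1 / 2 * ‖x - y‖ ^ 2) :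
    v + γ • f' v = y := by
  set d := v + γ • f' v - y with hd
  have hd_sq : ‖d‖ ^ 2 = ⟪v - y, d⟫ + γ * ⟪f' v, d⟫ := by
    rw [← real_inner_self_eq_norm_sq, ← real_inner_smul_left, ← inner_add_left, hd]
    abel_nf
  have hquad : ∀ t : ℝ, 0 ≤ (γ * β + 1) / 2 * ‖d‖ ^ 2 * (t * t) + ‖d‖ ^ 2 * t + 0 := by
    intro t
    have hmin := hv (v + t • d)
    have hsm_t := mul_le_mul_of_nonneg_left (hsm (v + t • d) v) hγ
    rw [add_sub_cancel_left, real_inner_smul_right, norm_smul, mul_pow, Real.norm_eq_abs,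
      sq_abs] at hsm_t
    rw [add_sub_right_comm, norm_add_sq_real, real_inner_smul_right, norm_smul, mul_pow,
      Real.norm_eq_abs, sq_abs] at hmin
    linear_combination hmin + hsm_t - t * hd_sq
  have hd_zero : ‖d‖ ^ 2 = 0 := by
    have hdisc := discrim_le_zero hquad
    rw [discrim] at hdisc
    nlinarith [sq_nonneg (‖d‖ ^ 2)]
  rw [← sub_eq_zero, ← norm_eq_zero]
  exact pow_eq_zero_iff two_ne_zero |>.mp hd_zero

/-- Baillon–Haddad: compare `φ` at `u − t (∇φ u − ∇φ v)` with its linearizations at `u` and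
`v`, symmetrize in `u, v`, and read off the discriminant of the resulting quadratic in `t`. -/
theorem norm_sq_sub_le_mul_inner_of_convex_of_smooth {L : ℝ} {φ : H → ℝ} {φ' : H → H}
    (hL : 0 ≤ L) (hconv : ∀ x y, φ y + ⟪φ' y, x - y⟫ ≤ φ x)
    (hsmooth : ∀ x y, φ x ≤ φ y + ⟪φ' y, x - y⟫ + L / 2 * ‖x - y‖ ^ 2) (u v : H) :
    ‖φ' u - φ' v‖ ^ 2 ≤ L * ⟪φ' u - φ' v, u - v⟫ := by
  have gap : ∀ u v : H, ∀ t : ℝ,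
      (t - L / 2 * t ^ 2) * ‖φ' u - φ' v‖ ^ 2 ≤ φ u - φ v - ⟪φ' v, u - v⟫ := by
    intro u v t
    set g := φ' u - φ' v
    have hlow := hconv (u - t • g) v
    have hup := hsmooth (u - t • g) u
    rw [sub_right_comm, inner_sub_right, real_inner_smul_right] at hlow
    rw [sub_sub_cancel_left, inner_neg_right, real_inner_smul_right, norm_neg, norm_smul,
      mul_pow, Real.norm_eq_abs, sq_abs] at hup
    have hg : ‖g‖ ^ 2 = ⟪φ' u, g⟫ - ⟪φ' v, g⟫ := by
      rw [← real_inner_self_eq_norm_sq, ← inner_sub_left]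
    linear_combination hlow + hup + t * hg
  set g := φ' u - φ' v
  have hquad : ∀ t : ℝ, 0 ≤ L * ‖g‖ ^ 2 * (t * t) + (-2 * ‖g‖ ^ 2) * t + ⟪g, u - v⟫ := by
    intro t
    have huv := gap u v t
    have hvu := gap v u t
    rw [norm_sub_rev] at hvu
    have hsym : ⟪g, u - v⟫ = -⟪φ' v, u - v⟫ - ⟪φ' u, v - u⟫ := by
      rw [← neg_sub u v, inner_neg_right, inner_sub_left]; ring
    linear_combination huv + hvu - hsym
  have hdisc := discrim_le_zero hquad
  have hinner := hquad 0
  rw [discrim] at hdisc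
  simp only [mul_zero, add_zero, zero_add] at hinner
  nlinarith [sq_nonneg ‖g‖, mul_nonneg hL hinner]

/-- `f − σ/2‖·‖²` is convex and `(β − σ)`-smooth with gradient `f' − σ • id`. -/
theorem inner_grad_sub_nonneg_of_strongly_convex_of_smooth {σ β : ℝ} {f : H → ℝ} {f' : H → H}
    (hσβ : σ ≤ β) (hsc : ∀ x y, f x ≥ f y + ⟪f' y, x - y⟫ + σ / 2 * ‖x - y‖ ^ 2)
    (hsm : ∀ x y, f x ≤ f y + ⟪f' y, x - y⟫ + β / 2 * ‖x - y‖ ^ 2) (u v : H) :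
    0 ≤ ⟪(f' u - σ • u) - (f' v - σ • v), (β • u - f' u) - (β • v - f' v)⟫ := by
  set φ : H → ℝ := fun x => f x - σ / 2 * ‖x‖ ^ 2
  set φ' : H → H := fun x => f' x - σ • x
  have hbregman : ∀ x y, φ x - φ y - ⟪φ' y, x - y⟫
      = f x - f y - ⟪f' y, x - y⟫ - σ / 2 * ‖x - y‖ ^ 2 := by
    intro x y
    simp only [φ, φ', inner_sub_left, inner_sub_right, real_inner_smul_left, norm_sub_sq_real,
      real_inner_self_eq_norm_sq, real_inner_comm x y]
    ring
  have hcoco := norm_sq_sub_le_mul_inner_of_convex_of_smooth (φ := φ) (φ' := φ')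
    (sub_nonneg.mpr hσβ) (fun x y => by linarith [hbregman x y, hsc x y])
    (fun x y => by linarith [hbregman x y, hsm x y]) u v
  have hψ : (β • u - f' u) - (β • v - f' v) = (β - σ) • (u - v) - (φ' u - φ' v) := by
    simp only [φ']; module
  rw [hψ, inner_sub_right, real_inner_smul_right, real_inner_self_eq_norm_sq]
  linarith

end

theorem prox_shift_cocoercive_general
    {H : Type*} [NormedAddCommGroup H] [InnerProductSpace ℝ H]
    (γ β σ : ℝ) (hγ : 0 < γ) (hσ : 0 < σ) (hβσ : σ ≤ β)
    (f : H → ℝ) (f' : H → H)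
    (hsc : ∀ x y, f x ≥ f y + ⟪f' y, x - y⟫ + σ / 2 * ‖x - y‖ ^ 2)
    (hsm : ∀ x y, f x ≤ f y + ⟪f' y, x - y⟫ + β / 2 * ‖x - y‖ ^ 2)
    (p : H → H)
    (hp : ∀ y x, γ * f (p y) + (1 / 2) * ‖p y - y‖ ^ 2 ≤ γ * f x + (1 / 2) * ‖x - y‖ ^ 2)
    (T : H → H) (hT : T = fun x => p x - (1 / (1 + γ * β)) • x) :
    (∀ x y, (1 / (1 + γ * σ) - 1 / (1 + γ * β)) * ⟪T x - T y, x - y⟫ ≥ ‖T x - T y‖ ^ 2)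
      ∧ (σ < β → ∀ x y,
          ⟪T x - T y, x - y⟫ ≥ (1 / (1 / (1 + γ * σ) - 1 / (1 + γ * β))) * ‖T x - T y‖ ^ 2)
      ∧ (β = σ → ∀ x y, T x = T y) := by
  have hγσ : 0 < 1 + γ * σ := by positivity
  have hγβ : 0 < 1 + γ * β := by have := hσ.trans_le hβσ; positivity
  set κ := 1 / (1 + γ * σ) - 1 / (1 + γ * β) with hκ
  have hres (x : H) : p x + γ • f' (p x) = x :=
    add_smul_eq_of_forall_prox_objective_le hγ.le hsm (hp x)
  have hT_eq (x : H) : T x = (γ / (1 + γ * β)) • (β • p x - f' (p x)) := by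
    calc T x = p x - (1 / (1 + γ * β)) • (p x + γ • f' (p x)) := by rw [hT, hres]
      _ = _ := by match_scalars <;> field_simp; ring
  have hκT_eq (x : H) : κ • x - T x = (γ / (1 + γ * σ)) • (f' (p x) - σ • p x) := by
    calc κ • x - T x = κ • (p x + γ • f' (p x)) - (γ / (1 + γ * β)) • (β • p x - f' (p x)) := by
          rw [hres, hT_eq]
      _ = _ := by rw [hκ]; match_scalars <;> field_simp <;> ring
  have hmain (x y : H) : κ * ⟪T x - T y, x - y⟫ ≥ ‖T x - T y‖ ^ 2 := by
    have key : 0 ≤ ⟪T x - T y, (κ • x - T x) - (κ • y - T y)⟫ := by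
      rw [hκT_eq, hκT_eq, hT_eq, hT_eq, ← smul_sub, ← smul_sub, real_inner_smul_left,
        real_inner_smul_right, real_inner_comm]
      have := inner_grad_sub_nonneg_of_strongly_convex_of_smooth hβσ hsc hsm (p x) (p y)
      exact mul_nonneg (by positivity) (mul_nonneg (by positivity) this)
    rw [sub_sub_sub_comm, ← smul_sub, inner_sub_right, real_inner_smul_right,
      real_inner_self_eq_norm_sq] at key
    linarith
  refine ⟨hmain, fun hlt x y => ?_, fun heq x y => ?_⟩
  · have hκ_pos : 0 < κ := sub_pos.mpr (one_div_lt_one_div_of_lt hγσ (by nlinarith))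
    rw [ge_iff_le, one_div_mul_eq_div, div_le_iff₀' hκ_pos]
    exact hmain x y
  · have h := hmain x y
    rw [hκ, heq, sub_self, zero_mul] at h
    rw [← sub_eq_zero, ← norm_eq_zero, ← sq_eq_zero_iff]
    exact le_antisymm h (sq_nonneg _)

/-- Cocoercivity of `prox_{γf} − (1/(1+γβ))·Id` for a `σ`-strongly convex and
`β`-smooth function `f`. -/
theorem prox_shift_cocoercive
    {H : Type*} [NormedAddCommGroup H] [InnerProductSpace ℝ H] [CompleteSpace H]
    (γ β σ : ℝ) (hγ : 0 < γ) (hσ : 0 < σ) (hβσ : σ ≤ β)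
    (f : H → ℝ) (f' : H → H) (hf' : ∀ x, HasGradientAt f (f' x) x)
    (hsc : ∀ x y, f x ≥ f y + ⟪f' y, x - y⟫ + σ / 2 * ‖x - y‖ ^ 2)
    (hsm : ∀ x y, f x ≤ f y + ⟪f' y, x - y⟫ + β / 2 * ‖x - y‖ ^ 2)
    (p : H → H)
    (hp : ∀ y x, γ * f (p y) + (1 / 2) * ‖p y - y‖ ^ 2 ≤ γ * f x + (1 / 2) * ‖x - y‖ ^ 2)
    (T : H → H) (hT : T = fun x => p x - (1 / (1 + γ * β)) • x) :
    (∀ x y, (1 / (1 + γ * σ) - 1 / (1 + γ * β)) * ⟪T x - T y, x - y⟫ ≥ ‖T x - T y‖ ^ 2)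
      ∧ (σ < β → ∀ x y,
          ⟪T x - T y, x - y⟫ ≥ (1 / (1 / (1 + γ * σ) - 1 / (1 + γ * β))) * ‖T x - T y‖ ^ 2)
      ∧ (β = σ → ∀ x y, T x = T y) :=
  prox_shift_cocoercive_general γ β σ hγ hσ hβσ f f' hsc hsm p hp T hT
end

section
/- Let H be a real Hilbert space, let γ > 0 and β ≥ σ > 0, and let f : H → ℝ be differentiable, σ-strongly convex and β-smooth. Let p : H → H be the proximal operator prox_{γf} and let R := 2p − Id be the reflected proximal operator. Set δ := max((γβ − 1)/(γβ + 1), (1 − γσ)/(1 + γσ)). Then δ ∈ [0, 1) and R is δ-contractive: ‖R(x) − R(y)‖ ≤ δ‖x − y‖ for all x, y ∈ H. -/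
/-!
Writing `u = p x`, `v = p y`, the optimality of the prox gives `x = u + γ ∇f(u)`, so that
`x - y = d + γ e` and `R x - R y = d - γ e` with `d = u - v`, `e = ∇f(u) - ∇f(v)`.
Strong convexity and smoothness confine `e` by `σ ‖d‖² ≤ ⟪e, d⟫ ≤ β ‖d‖²` and by the interpolation
inequality `‖e‖² + σβ ‖d‖² ≤ (σ + β) ⟪e, d⟫` (cocoercivity of `∇f - σ Id`). The claim
`‖d - γ e‖² ≤ δ² ‖d + γ e‖²` is a quadratic form in `(‖d‖², ⟪e, d⟫, ‖e‖²)`, which under these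
constraints is nonpositive as soon as the scalar quadratic `(1 - γc)² - δ² (1 + γc)²` is nonpositive
at `c = σ` and `c = β`; that is exactly what the choice of `δ` ensures.
-/

open scoped RealInnerProductSpace

open Set

-- Along `σ n ≤ t ≤ β n` the bound `A n + B t + C ((σ + β) t - σ β n)` is affine in `t`;
-- at the endpoints it equals `q(σ) n` and `q(β) n`, with `q(c) = A + B c + C c²`.
theorem quadratic_form_nonpos_of_interpolation {A B C σ β n t g : ℝ} (hC : 0 ≤ C) (hn : 0 ≤ n)
    (hσt : σ * n ≤ t) (htβ : t ≤ β * n) (hg : g + σ * β * n ≤ (σ + β) * t)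
    (hqσ : A + B * σ + C * σ ^ 2 ≤ 0) (hqβ : A + B * β + C * β ^ 2 ≤ 0) :
    A * n + B * t + C * g ≤ 0 := by
  have hCg := mul_le_mul_of_nonneg_left hg hC
  rcases le_total 0 (B + C * (σ + β)) with hslope | hslope
  · nlinarith [mul_le_mul_of_nonneg_left htβ hslope, mul_nonpos_of_nonpos_of_nonneg hqβ hn]
  · nlinarith [mul_le_mul_of_nonpos_left hσt hslope, mul_nonpos_of_nonpos_of_nonneg hqσ hn]

noncomputable def reflectedProxFactor (γ σ β : ℝ) : ℝ :=
  max ((γ * β - 1) / (γ * β + 1)) ((1 - γ * σ) / (1 + γ * σ))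

section ReflectedProxFactor

variable {γ σ β : ℝ}

theorem reflectedProxFactor_nonneg (hγ : 0 ≤ γ) (hσ : 0 ≤ σ) (hσβ : σ ≤ β) :
    0 ≤ reflectedProxFactor γ σ β := by
  have hγσβ : γ * σ ≤ γ * β := mul_le_mul_of_nonneg_left hσβ hγ
  rcases le_total 1 (γ * β) with h | h
  · exact le_max_of_le_left (div_nonneg (by linarith) (by linarith))
  · exact le_max_of_le_right (div_nonneg (by linarith) (by positivity))

theorem reflectedProxFactor_lt_one (hγ : 0 < γ) (hσ : 0 < σ) (hσβ : σ ≤ β) :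
    reflectedProxFactor γ σ β < 1 := by
  have hγσ : 0 < γ * σ := mul_pos hγ hσ
  have hγσβ : γ * σ ≤ γ * β := mul_le_mul_of_nonneg_left hσβ hγ.le
  exact max_lt ((div_lt_one (by linarith)).2 (by linarith))
    ((div_lt_one (by linarith)).2 (by linarith))

theorem abs_one_sub_mul_le_reflectedProxFactor_mul (hγ : 0 ≤ γ) (hσ : 0 ≤ σ) {c : ℝ}
    (hc : c ∈ Icc σ β) : |1 - γ * c| ≤ reflectedProxFactor γ σ β * (1 + γ * c) := by
  obtain ⟨hσc, hcβ⟩ := hc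
  have hγc : 0 ≤ γ * c := mul_nonneg hγ (hσ.trans hσc)
  have hγσ : 0 ≤ γ * σ := mul_nonneg hγ hσ
  have hσcβ : γ * σ ≤ γ * c ∧ γ * c ≤ γ * β :=
    ⟨mul_le_mul_of_nonneg_left hσc hγ, mul_le_mul_of_nonneg_left hcβ hγ⟩
  rw [abs_le]
  constructor
  · have hmono : (γ * c - 1) / (γ * c + 1) ≤ (γ * β - 1) / (γ * β + 1) := by
      rw [div_le_div_iff₀ (by linarith) (by linarith)]
      nlinarith
    have hleft := hmono.trans (le_max_left _ ((1 - γ * σ) / (1 + γ * σ)))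
    rw [div_le_iff₀ (by linarith)] at hleft
    unfold reflectedProxFactor
    linarith
  · have hmono : (1 - γ * c) / (1 + γ * c) ≤ (1 - γ * σ) / (1 + γ * σ) := by
      rw [div_le_div_iff₀ (by linarith) (by linarith)]
      nlinarith
    exact (div_le_iff₀ (by linarith)).1 (hmono.trans (le_max_right _ _))

end ReflectedProxFactor

section Hilbert

variable {H : Type*} [NormedAddCommGroup H] [InnerProductSpace ℝ H]

theorem norm_sq_le_two_mul_sub_of_quadratic_upper_bound {φ : H → ℝ} {v w : H} {L m : ℝ}
    (hL : 0 < L) (hm : ∀ x, m ≤ φ x)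
    (hφ : ∀ x, φ x ≤ φ v + ⟪w, x - v⟫ + L / 2 * ‖x - v‖ ^ 2) :
    ‖w‖ ^ 2 ≤ 2 * L * (φ v - m) := by
  have hstep : ⟪w, v - L⁻¹ • w - v⟫ + L / 2 * ‖v - L⁻¹ • w - v‖ ^ 2 = -(‖w‖ ^ 2 / (2 * L)) := by
    rw [sub_sub_cancel_left, inner_neg_right, norm_neg, real_inner_smul_right,
      real_inner_self_eq_norm_sq, norm_smul, mul_pow, Real.norm_eq_abs, sq_abs]
    field_simp
    ring
  have hdesc : ‖w‖ ^ 2 / (2 * L) ≤ φ v - m := by linarith [(hm _).trans (hφ (v - L⁻¹ • w))]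
  rwa [div_le_iff₀' (by positivity)] at hdesc

theorem norm_sub_sq_eq_sub_sub_inner (x y : H) :
    ‖x - y‖ ^ 2 = ‖x‖ ^ 2 - ‖y‖ ^ 2 - 2 * ⟪y, x - y⟫ := by
  have := norm_add_sq_real y (x - y)
  rw [add_sub_cancel] at this
  linarith

theorem mul_norm_sub_sq_le_inner_of_lower_bound {f : H → ℝ} {f' : H → H} {c : ℝ}
    (hf : ∀ x y, f y + ⟪f' y, x - y⟫ + c / 2 * ‖x - y‖ ^ 2 ≤ f x) (x y : H) :
    c * ‖x - y‖ ^ 2 ≤ ⟪f' x - f' y, x - y⟫ := by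
  have hxy := hf x y
  have hyx := hf y x
  rw [← neg_sub x y, inner_neg_right, norm_neg] at hyx
  rw [inner_sub_left]
  linarith

theorem inner_le_mul_norm_sub_sq_of_upper_bound {f : H → ℝ} {f' : H → H} {c : ℝ}
    (hf : ∀ x y, f x ≤ f y + ⟪f' y, x - y⟫ + c / 2 * ‖x - y‖ ^ 2) (x y : H) :
    ⟪f' x - f' y, x - y⟫ ≤ c * ‖x - y‖ ^ 2 := by
  have hxy := hf x y
  have hyx := hf y x
  rw [← neg_sub x y, inner_neg_right, norm_neg] at hyx
  rw [inner_sub_left]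
  linarith

theorem cocoercive_of_convex_of_smooth_of_pos {h : H → ℝ} {h' : H → H} {L : ℝ} (hL : 0 < L)
    (hc : ∀ x y, h y + ⟪h' y, x - y⟫ ≤ h x)
    (hs : ∀ x y, h x ≤ h y + ⟪h' y, x - y⟫ + L / 2 * ‖x - y‖ ^ 2) (u v : H) :
    ‖h' u - h' v‖ ^ 2 ≤ L * ⟪h' u - h' v, u - v⟫ := by
  -- `z ↦ h z - ⟪h' s, z⟫` is minimal at `s` and has gradient `h' z - h' s`
  have gap : ∀ s t, ‖h' t - h' s‖ ^ 2 ≤ 2 * L * (h t - h s - ⟪h' s, t - s⟫) := by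
    intro s t
    have hdescent := norm_sq_le_two_mul_sub_of_quadratic_upper_bound (φ := fun z => h z - ⟪h' s, z⟫)
      (v := t) (w := h' t - h' s) (m := h s - ⟪h' s, s⟫) hL
      (fun x => by linarith [hc x s, inner_sub_right (𝕜 := ℝ) (h' s) x s])
      (fun x => by
        linarith [hs x t, inner_sub_left (𝕜 := ℝ) (h' t) (h' s) (x - t),
          inner_sub_right (𝕜 := ℝ) (h' s) x t])
    rw [inner_sub_right]
    linear_combination hdescent
  have huv := gap v u
  have hvu := gap u v
  rw [norm_sub_rev, ← neg_sub u v, inner_neg_right] at hvu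
  rw [inner_sub_left]
  linear_combination (huv + hvu) / 2

theorem cocoercive_of_convex_of_smooth {h : H → ℝ} {h' : H → H} {L : ℝ} (hL : 0 ≤ L)
    (hc : ∀ x y, h y + ⟪h' y, x - y⟫ ≤ h x)
    (hs : ∀ x y, h x ≤ h y + ⟪h' y, x - y⟫ + L / 2 * ‖x - y‖ ^ 2) (u v : H) :
    ‖h' u - h' v‖ ^ 2 ≤ L * ⟪h' u - h' v, u - v⟫ := by
  have hlarger : ∀ L' ∈ Ioi L, ‖h' u - h' v‖ ^ 2 ≤ L' * ⟪h' u - h' v, u - v⟫ := by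
    intro L' hL'
    refine cocoercive_of_convex_of_smooth_of_pos (hL.trans_lt hL') hc (fun x y => ?_) u v
    nlinarith [hs x y, mul_le_mul_of_nonneg_right (le_of_lt hL') (sq_nonneg ‖x - y‖)]
  exact ge_of_tendsto ((continuous_mul_const _).tendsto L |>.mono_left nhdsWithin_le_nhds)
    (eventually_nhdsWithin_of_forall hlarger)

theorem interpolation_of_strongly_convex_of_smooth {f : H → ℝ} {f' : H → H} {σ β : ℝ}
    (hσβ : σ ≤ β)
    (hsc : ∀ x y, f y + ⟪f' y, x - y⟫ + σ / 2 * ‖x - y‖ ^ 2 ≤ f x)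
    (hsm : ∀ x y, f x ≤ f y + ⟪f' y, x - y⟫ + β / 2 * ‖x - y‖ ^ 2) (u v : H) :
    ‖f' u - f' v‖ ^ 2 + σ * β * ‖u - v‖ ^ 2 ≤ (σ + β) * ⟪f' u - f' v, u - v⟫ := by
  -- `f - σ/2 ‖·‖²` is convex and `(β - σ)`-smooth
  have hexpand : ∀ x y : H, ⟪f' y - σ • y, x - y⟫ =
      ⟪f' y, x - y⟫ - σ / 2 * (‖x‖ ^ 2 - ‖y‖ ^ 2 - ‖x - y‖ ^ 2) := by
    intro x y
    rw [inner_sub_left, real_inner_smul_left, norm_sub_sq_eq_sub_sub_inner]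
    ring
  have hcocoercive := cocoercive_of_convex_of_smooth (h := fun z => f z - σ / 2 * ‖z‖ ^ 2)
    (h' := fun z => f' z - σ • z) (sub_nonneg.2 hσβ)
    (fun x y => by linarith [hsc x y, hexpand x y])
    (fun x y => by linarith [hsm x y, hexpand x y]) u v
  rw [show f' u - σ • u - (f' v - σ • v) = (f' u - f' v) - σ • (u - v) by rw [smul_sub]; abel]
    at hcocoercive
  generalize f' u - f' v = e at hcocoercive ⊢
  generalize u - v = d at hcocoercive ⊢
  rw [norm_sub_sq_real, inner_sub_left, real_inner_smul_right, real_inner_smul_left,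
    real_inner_self_eq_norm_sq, norm_smul, mul_pow, Real.norm_eq_abs, sq_abs] at hcocoercive
  linarith

theorem add_smul_grad_eq_of_prox_minimizer {f : H → ℝ} {f' : H → H} {γ β : ℝ}
    (hγ : 0 ≤ γ) (hβ : 0 ≤ β)
    (hsm : ∀ x y, f x ≤ f y + ⟪f' y, x - y⟫ + β / 2 * ‖x - y‖ ^ 2) {y v : H}
    (hv : ∀ x, γ * f v + 1 / 2 * ‖v - y‖ ^ 2 ≤ γ * f x + 1 / 2 * ‖x - y‖ ^ 2) :
    v + γ • f' v = y := by
  have hupper : ∀ x, γ * f x + 1 / 2 * ‖x - y‖ ^ 2 ≤ γ * f v + 1 / 2 * ‖v - y‖ ^ 2 +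
      ⟪v - y + γ • f' v, x - v⟫ + (γ * β + 1) / 2 * ‖x - v‖ ^ 2 := by
    intro x
    have hsplit := norm_add_sq_real (v - y) (x - v)
    rw [sub_add_sub_cancel'] at hsplit
    rw [inner_add_left, real_inner_smul_left]
    nlinarith [mul_le_mul_of_nonneg_left (hsm x v) hγ]
  have hgrad := norm_sq_le_two_mul_sub_of_quadratic_upper_bound (by positivity) hv hupper
  rw [sub_self, mul_zero, sq_nonpos_iff, norm_eq_zero] at hgrad
  rw [← sub_eq_zero, ← hgrad]
  abel

theorem norm_sub_smul_le_mul_norm_add_smul {d e : H} {γ σ β δ : ℝ} (hδ : δ ∈ Icc 0 1)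
    (hσ : σ * ‖d‖ ^ 2 ≤ ⟪e, d⟫) (hβ : ⟪e, d⟫ ≤ β * ‖d‖ ^ 2)
    (hint : ‖e‖ ^ 2 + σ * β * ‖d‖ ^ 2 ≤ (σ + β) * ⟪e, d⟫)
    (hδσ : |1 - γ * σ| ≤ δ * (1 + γ * σ)) (hδβ : |1 - γ * β| ≤ δ * (1 + γ * β)) :
    ‖d - γ • e‖ ≤ δ * ‖d + γ • e‖ := by
  obtain ⟨hδ0, hδ1⟩ := hδ
  have hq : ∀ c, |1 - γ * c| ≤ δ * (1 + γ * c) →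
      (1 - δ ^ 2) + (-2 * γ * (1 + δ ^ 2)) * c + γ ^ 2 * (1 - δ ^ 2) * c ^ 2 ≤ 0 := by
    intro c hc
    nlinarith [sq_le_sq' (neg_le_of_abs_le hc) (le_of_abs_le hc)]
  have hform := quadratic_form_nonpos_of_interpolation
    (mul_nonneg (sq_nonneg γ) (by nlinarith)) (sq_nonneg ‖d‖) hσ hβ hint (hq σ hδσ) (hq β hδβ)
  have hsq : ‖d - γ • e‖ ^ 2 ≤ (δ * ‖d + γ • e‖) ^ 2 := by
    rw [mul_pow, norm_sub_sq_real, norm_add_sq_real, real_inner_smul_right, norm_smul, mul_pow,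
      Real.norm_eq_abs, sq_abs, real_inner_comm]
    linarith
  exact (sq_le_sq₀ (norm_nonneg _) (by positivity)).1 hsq

end Hilbert

theorem reflected_prox_contractive_general
    {H : Type*} [NormedAddCommGroup H] [InnerProductSpace ℝ H]
    (γ β σ : ℝ) (hγ : 0 < γ) (hσ : 0 < σ) (hβσ : σ ≤ β)
    (f : H → ℝ) (f' : H → H)
    (hsc : ∀ x y, f x ≥ f y + ⟪f' y, x - y⟫ + σ / 2 * ‖x - y‖ ^ 2)
    (hsm : ∀ x y, f x ≤ f y + ⟪f' y, x - y⟫ + β / 2 * ‖x - y‖ ^ 2)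
    (p : H → H)
    (hp : ∀ y x, γ * f (p y) + (1 / 2) * ‖p y - y‖ ^ 2 ≤ γ * f x + (1 / 2) * ‖x - y‖ ^ 2)
    (R : H → H) (hR : R = fun x => (2 : ℝ) • p x - x)
    (δ : ℝ) (hδ : δ = max ((γ * β - 1) / (γ * β + 1)) ((1 - γ * σ) / (1 + γ * σ))) :
    (0 ≤ δ ∧ δ < 1) ∧ ∀ x y, ‖R x - R y‖ ≤ δ * ‖x - y‖ := by
  change δ = reflectedProxFactor γ σ β at hδ
  subst hδ
  have hδ0 := reflectedProxFactor_nonneg hγ.le hσ.le hβσ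
  have hδ1 := reflectedProxFactor_lt_one hγ hσ hβσ
  refine ⟨⟨hδ0, hδ1⟩, fun x y => ?_⟩
  have hres : ∀ z, p z + γ • f' (p z) = z := fun z =>
    add_smul_grad_eq_of_prox_minimizer hγ.le (hσ.le.trans hβσ) hsm (hp z)
  have hxy : x - y = (p x - p y) + γ • (f' (p x) - f' (p y)) := by
    conv_lhs => rw [← hres x, ← hres y]
    module
  have hRxy : R x - R y = (p x - p y) - γ • (f' (p x) - f' (p y)) := by
    rw [show R x - R y = (2 : ℝ) • (p x - p y) - (x - y) by rw [hR]; module, hxy]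
    module
  rw [hxy, hRxy]
  exact norm_sub_smul_le_mul_norm_add_smul ⟨hδ0, hδ1.le⟩
    (mul_norm_sub_sq_le_inner_of_lower_bound hsc _ _)
    (inner_le_mul_norm_sub_sq_of_upper_bound hsm _ _)
    (interpolation_of_strongly_convex_of_smooth hβσ hsc hsm _ _)
    (abs_one_sub_mul_le_reflectedProxFactor_mul hγ.le hσ.le ⟨le_rfl, hβσ⟩)
    (abs_one_sub_mul_le_reflectedProxFactor_mul hγ.le hσ.le ⟨hβσ, le_rfl⟩)

/-- The reflected proximal operator `R_{γf} = 2·prox_{γf} − Id` of a `σ`-strongly convex,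
`β`-smooth function is `δ`-contractive with
`δ = max((γβ−1)/(γβ+1), (1−γσ)/(1+γσ)) ∈ [0,1)`. -/
theorem reflected_prox_contractive
    {H : Type*} [NormedAddCommGroup H] [InnerProductSpace ℝ H] [CompleteSpace H]
    (γ β σ : ℝ) (hγ : 0 < γ) (hσ : 0 < σ) (hβσ : σ ≤ β)
    (f : H → ℝ) (f' : H → H) (hf' : ∀ x, HasGradientAt f (f' x) x)
    (hsc : ∀ x y, f x ≥ f y + ⟪f' y, x - y⟫ + σ / 2 * ‖x - y‖ ^ 2)
    (hsm : ∀ x y, f x ≤ f y + ⟪f' y, x - y⟫ + β / 2 * ‖x - y‖ ^ 2)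
    (p : H → H)
    (hp : ∀ y x, γ * f (p y) + (1 / 2) * ‖p y - y‖ ^ 2 ≤ γ * f x + (1 / 2) * ‖x - y‖ ^ 2)
    (R : H → H) (hR : R = fun x => (2 : ℝ) • p x - x)
    (δ : ℝ) (hδ : δ = max ((γ * β - 1) / (γ * β + 1)) ((1 - γ * σ) / (1 + γ * σ))) :
    (0 ≤ δ ∧ δ < 1) ∧ ∀ x y, ‖R x - R y‖ ≤ δ * ‖x - y‖ :=
  reflected_prox_contractive_general γ β σ hγ hσ hβσ f f' hsc hsm p hp R hR δ hδ
end

section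
/- Let H be a real Hilbert space, let γ > 0 and β ≥ σ > 0. Let f : H → ℝ be differentiable, σ-strongly convex and β-smooth, and let g : H → ℝ be convex and continuous, with proximal operators p_f = prox_{γf} and p_g = prox_{γg}, reflected proximal operators R_f = 2p_f − Id and R_g = 2p_g − Id, and δ := max((γβ − 1)/(γβ + 1), (1 − γσ)/(1 + γσ)). Let α ∈ (0, 2/(1+δ)), let z̄ be a fixed point of R_g ∘ R_f, and let z^{k+1} = (1 − α)z^k + α·R_g(R_f(z^k)) be the Douglas–Rachford iterates from an initial point z^0. Set x^k := p_f(z^k) and x* := p_f(z̄). Then for all k ≥ 0: ‖x^k − x*‖ ≤ (|1 − α| + δ·α)^k · (1/(1 + γσ)) · ‖z^0 − z̄‖ (R-linear convergence of the x-iterates). -/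
open scoped RealInnerProductSpace

/-!
Smoothness of `f` turns the prox inequality into `p + γ ∇f(p) = z` for `p = prox_{γf}(z)`. Hence,
with `a = p_f u - p_f v` and `d = ∇f(p_f u) - ∇f(p_f v)`, one has `u - v = a + γ d` and
`R_f u - R_f v = a - γ d`. Strong convexity and smoothness give the interpolation inequality
`⟪d - σ a, β a - d⟫ ≥ 0` (co-coercivity of `∇f - σ Id`), which places `R_f u - R_f v` in the
ball with diameter `[-((γβ - 1)/(γβ + 1)) (u - v), ((1 - γσ)/(1 + γσ)) (u - v)]`, so `R_f` is
`δ`-Lipschitz. `R_g` is nonexpansive because `prox_{γg}` is firmly nonexpansive, so each relaxed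
step shrinks `‖z^k - z̄‖` by the factor `|1 - α| + δ α`, and `‖x^k - x*‖ ≤ ‖z^k - z̄‖ / (1 + γσ)`
by strong monotonicity of `∇f`.
-/

lemma nonneg_of_forall_nonneg_mul_add_sq_mul {a b : ℝ}
    (h : ∀ t : ℝ, 0 < t → t ≤ 1 → 0 ≤ t * a + t ^ 2 * b) : 0 ≤ a := by
  by_contra! ha
  set t := min 1 (-a / (|b| + 1))
  have ht : 0 < t := lt_min one_pos (div_pos (neg_pos.2 ha) (by positivity))
  have hta : t * (|b| + 1) ≤ -a := (le_div_iff₀ (by positivity)).1 (min_le_right _ _)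
  nlinarith [h t ht (min_le_left _ _), le_abs_self b, mul_le_mul_of_nonneg_left hta ht.le]

lemma le_mul_of_forall_mul_two_sub_mul_le {a b L : ℝ} (hL : 0 ≤ L)
    (h : ∀ s : ℝ, s * (2 - L * s) * a ≤ b) : a ≤ L * b := by
  rcases hL.eq_or_lt with rfl | hL
  · simp only [zero_mul, sub_zero] at h ⊢
    by_contra! ha
    have hs : (b + 1) / (2 * a) * 2 * a = b + 1 := by field_simp
    linarith [h ((b + 1) / (2 * a))]
  · have := h L⁻¹
    field_simp at this
    linarith

lemma div_add_div_nonneg_of_le {s t : ℝ} (hs : 0 ≤ s) (hst : s ≤ t) :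
    0 ≤ (t - 1) / (t + 1) + (1 - s) / (1 + s) := by
  have ht : 0 ≤ t := hs.trans hst
  rw [div_add_div _ _ (by positivity) (by positivity)]
  exact div_nonneg (by nlinarith) (by positivity)

lemma norm_relaxed_iterate_sub_le {E : Type*} [SeminormedAddCommGroup E] [NormedSpace ℝ E]
    {T : E → E} {z : ℕ → E} {zbar : E} {α δ : ℝ} (hα : 0 ≤ α) (hδ : 0 ≤ δ)
    (hT : ∀ u, ‖T u - zbar‖ ≤ δ * ‖u - zbar‖)
    (hz : ∀ k, z (k + 1) = (1 - α) • z k + α • T (z k)) (k : ℕ) :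
    ‖z k - zbar‖ ≤ (|1 - α| + δ * α) ^ k * ‖z 0 - zbar‖ := by
  refine le_geom (u := fun n => ‖z n - zbar‖) (add_nonneg (abs_nonneg _) (mul_nonneg hδ hα)) k
    fun n _ => ?_
  have hstep : z (n + 1) - zbar = (1 - α) • (z n - zbar) + α • (T (z n) - zbar) := by
    rw [hz]; module
  calc ‖z (n + 1) - zbar‖ ≤ ‖(1 - α) • (z n - zbar)‖ + ‖α • (T (z n) - zbar)‖ :=
        hstep ▸ norm_add_le _ _
    _ = |1 - α| * ‖z n - zbar‖ + α * ‖T (z n) - zbar‖ := by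
        rw [norm_smul, norm_smul, Real.norm_eq_abs, Real.norm_eq_abs, abs_of_nonneg hα]
    _ ≤ |1 - α| * ‖z n - zbar‖ + α * (δ * ‖z n - zbar‖) := by gcongr; exact hT _
    _ = (|1 - α| + δ * α) * ‖z n - zbar‖ := by ring

section InnerProduct

variable {H : Type*} [NormedAddCommGroup H] [InnerProductSpace ℝ H]

lemma norm_two_smul_sub_le_of_norm_sq_le_inner {a x : H} (h : ‖a‖ ^ 2 ≤ ⟪x, a⟫) :
    ‖(2 : ℝ) • a - x‖ ≤ ‖x‖ := by
  refine sq_le_sq₀ (norm_nonneg _) (norm_nonneg _) |>.1 ?_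
  rw [norm_sub_sq_real, norm_smul, real_inner_smul_left, real_inner_comm]
  norm_num
  nlinarith

lemma norm_le_max_mul_norm_of_inner_add_smul_sub_smul_nonpos {x y : H} {a b : ℝ}
    (hab : 0 ≤ a + b) (h : ⟪y + a • x, y - b • x⟫ ≤ 0) : ‖y‖ ≤ max a b * ‖x‖ := by
  -- `y` lies in the ball with diameter `[-a • x, b • x]`
  set c := (b - a) / 2 with hc_def
  set r := (a + b) / 2 with hr_def
  have hball : ‖y - c • x‖ ≤ r * ‖x‖ := by
    refine (sq_le_sq₀ (norm_nonneg _) (by positivity)).1 ?_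
    have hexp : ‖y - c • x‖ ^ 2 = ⟪y + a • x, y - b • x⟫ + (r * ‖x‖) ^ 2 := by
      rw [norm_sub_sq_real, inner_add_left, inner_sub_right, inner_sub_right, norm_smul,
        Real.norm_eq_abs, real_inner_smul_left, real_inner_smul_right, real_inner_smul_left,
        real_inner_smul_right, real_inner_smul_right, real_inner_self_eq_norm_sq,
        real_inner_self_eq_norm_sq, real_inner_comm x y, mul_pow, sq_abs]
      ring
    linarith
  have hc : |c| ≤ max a b - r :=
    abs_le.2 ⟨by linarith [le_max_left a b], by linarith [le_max_right a b]⟩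
  calc ‖y‖ = ‖(y - c • x) + c • x‖ := by rw [sub_add_cancel]
    _ ≤ r * ‖x‖ + |c| * ‖x‖ := by
      refine (norm_add_le _ _).trans ?_
      rw [norm_smul, Real.norm_eq_abs]
      gcongr
    _ ≤ max a b * ‖x‖ := by nlinarith [norm_nonneg x]

variable {γ σ β : ℝ} {h f : H → ℝ} {f' p : H → H}

lemma mul_norm_sub_sq_le_inner_of_strongConvex
    (hsc : ∀ x y, f x ≥ f y + ⟪f' y, x - y⟫ + σ / 2 * ‖x - y‖ ^ 2) (x y : H) :
    σ * ‖x - y‖ ^ 2 ≤ ⟪f' x - f' y, x - y⟫ := by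
  have hxy := hsc x y
  have hyx := hsc y x
  rw [← neg_sub x y, inner_neg_right, norm_neg] at hyx
  rw [inner_sub_left]
  linarith

lemma norm_sub_sq_le_mul_inner_of_convex_smooth {h' : H → H} {L : ℝ} (hL : 0 ≤ L)
    (hlow : ∀ x y, h y + ⟪h' y, x - y⟫ ≤ h x)
    (hup : ∀ x y, h x ≤ h y + ⟪h' y, x - y⟫ + L / 2 * ‖x - y‖ ^ 2) (x y : H) :
    ‖h' x - h' y‖ ^ 2 ≤ L * ⟪h' x - h' y, x - y⟫ := by
  -- a step of length `s` from `x` along `-(h' x - h' y)` descends below the tangent at `y`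
  have descent : ∀ x y : H, ∀ s : ℝ,
      h y + ⟪h' y, x - y⟫ + (s - L / 2 * s ^ 2) * ‖h' x - h' y‖ ^ 2 ≤ h x := by
    intro x y s
    have hl := hlow (x - s • (h' x - h' y)) y
    have hu := hup (x - s • (h' x - h' y)) x
    rw [sub_right_comm, inner_sub_right, real_inner_smul_right] at hl
    rw [sub_sub_cancel_left, inner_neg_right, real_inner_smul_right, norm_neg, norm_smul,
      Real.norm_eq_abs, mul_pow, sq_abs] at hu
    have hw : s * ⟪h' x, h' x - h' y⟫ - s * ⟪h' y, h' x - h' y⟫ = s * ‖h' x - h' y‖ ^ 2 := by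
      rw [← mul_sub, ← inner_sub_left, real_inner_self_eq_norm_sq]
    linarith
  refine le_mul_of_forall_mul_two_sub_mul_le hL fun s => ?_
  have hxy := descent x y s
  have hyx := descent y x s
  rw [norm_sub_rev (h' y)] at hyx
  have hcross : ⟪h' y, x - y⟫ + ⟪h' x, y - x⟫ = -⟪h' x - h' y, x - y⟫ := by
    rw [← neg_sub x y, inner_neg_right, inner_sub_left]; ring
  nlinarith

lemma inner_sub_smul_nonneg_of_strongConvex_smooth (hσβ : σ ≤ β)
    (hsc : ∀ x y, f x ≥ f y + ⟪f' y, x - y⟫ + σ / 2 * ‖x - y‖ ^ 2)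
    (hsm : ∀ x y, f x ≤ f y + ⟪f' y, x - y⟫ + β / 2 * ‖x - y‖ ^ 2) (x y : H) :
    0 ≤ ⟪f' x - f' y - σ • (x - y), β • (x - y) - (f' x - f' y)⟫ := by
  -- `f - σ/2 ‖·‖²` is convex and `(β - σ)`-smooth, with gradient `f' - σ • id`
  have shift : ∀ x y : H, (f x - σ / 2 * ‖x‖ ^ 2)
      - (f y - σ / 2 * ‖y‖ ^ 2 + ⟪f' y - σ • y, x - y⟫)
      = f x - (f y + ⟪f' y, x - y⟫) - σ / 2 * ‖x - y‖ ^ 2 := by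
    intro x y
    have hy : ⟪y, x - y⟫ = ⟪x, y⟫ - ‖y‖ ^ 2 := by
      rw [inner_sub_right, real_inner_self_eq_norm_sq, real_inner_comm]
    rw [inner_sub_left, real_inner_smul_left, hy, norm_sub_sq_real]
    ring
  have hcoco := norm_sub_sq_le_mul_inner_of_convex_smooth
    (h := fun x => f x - σ / 2 * ‖x‖ ^ 2) (h' := fun x => f' x - σ • x) (sub_nonneg.2 hσβ)
    (fun x y => by linarith [shift x y, hsc x y])
    (fun x y => by linarith [shift x y, hsm x y]) x y
  have hw : f' x - σ • x - (f' y - σ • y) = f' x - f' y - σ • (x - y) := by module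
  have hd : β • (x - y) - (f' x - f' y) = (β - σ) • (x - y) - (f' x - f' y - σ • (x - y)) := by
    module
  simp only [hw] at hcoco
  rw [hd, inner_sub_right, real_inner_smul_right, real_inner_self_eq_norm_sq]
  linarith

def IsProx (γ : ℝ) (h : H → ℝ) (p : H → H) : Prop :=
  ∀ y x, γ * h (p y) + (1 / 2) * ‖p y - y‖ ^ 2 ≤ γ * h x + (1 / 2) * ‖x - y‖ ^ 2

def reflect (p : H → H) (x : H) : H := (2 : ℝ) • p x - x

lemma reflect_sub_reflect (p : H → H) (u v : H) :
    reflect p u - reflect p v = (2 : ℝ) • (p u - p v) - (u - v) := by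
  unfold reflect; module

lemma IsProx.zero_le_perturb (hp : IsProx γ h p) (y v : H) (t : ℝ) :
    0 ≤ γ * (h (p y + t • v) - h (p y)) + t * ⟪p y - y, v⟫ + t ^ 2 / 2 * ‖v‖ ^ 2 := by
  have hmin := hp y (p y + t • v)
  rw [add_sub_right_comm, norm_add_sq_real, real_inner_smul_right, norm_smul,
    Real.norm_eq_abs, mul_pow, sq_abs] at hmin
  linarith

lemma IsProx.inner_le (hp : IsProx γ h p) (hγ : 0 ≤ γ) (hh : ConvexOn ℝ Set.univ h)
    (y x : H) : ⟪y - p y, x - p y⟫ ≤ γ * (h x - h (p y)) := by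
  suffices 0 ≤ γ * (h x - h (p y)) + ⟪p y - y, x - p y⟫ by
    rw [← neg_sub, inner_neg_left]; linarith
  refine nonneg_of_forall_nonneg_mul_add_sq_mul (b := ‖x - p y‖ ^ 2 / 2) fun t ht0 ht1 => ?_
  have hconv : h (p y + t • (x - p y)) ≤ (1 - t) * h (p y) + t * h x := by
    have := hh.2 (Set.mem_univ (p y)) (Set.mem_univ x) (sub_nonneg.2 ht1) ht0.le (by ring)
    rwa [show (1 - t) • p y + t • x = p y + t • (x - p y) by module] at this
  nlinarith [hp.zero_le_perturb y (x - p y) t, mul_le_mul_of_nonneg_left hconv hγ]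

lemma IsProx.norm_sub_sq_le_inner (hp : IsProx γ h p) (hγ : 0 ≤ γ)
    (hh : ConvexOn ℝ Set.univ h) (u v : H) : ‖p u - p v‖ ^ 2 ≤ ⟪u - v, p u - p v⟫ := by
  have hu := hp.inner_le hγ hh u (p v)
  have hv := hp.inner_le hγ hh v (p u)
  have hsum : ⟪u - p u, p v - p u⟫ + ⟪v - p v, p u - p v⟫
      = ⟪p u - p v, p u - p v⟫ - ⟪u - v, p u - p v⟫ := by
    rw [← neg_sub (p u) (p v), inner_neg_right, neg_add_eq_sub, ← inner_sub_left,
      ← inner_sub_left]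
    congr 1; abel
  rw [← real_inner_self_eq_norm_sq]
  linarith

lemma IsProx.norm_reflect_sub_le (hp : IsProx γ h p) (hγ : 0 ≤ γ)
    (hh : ConvexOn ℝ Set.univ h) (u v : H) : ‖reflect p u - reflect p v‖ ≤ ‖u - v‖ := by
  rw [reflect_sub_reflect]
  exact norm_two_smul_sub_le_of_norm_sq_le_inner (hp.norm_sub_sq_le_inner hγ hh u v)

lemma IsProx.add_smul_grad_eq (hp : IsProx γ f p) (hγ : 0 ≤ γ)
    (hsm : ∀ x y, f x ≤ f y + ⟪f' y, x - y⟫ + β / 2 * ‖x - y‖ ^ 2) (y : H) :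
    p y + γ • f' (p y) = y := by
  set e := p y + γ • f' (p y) - y
  suffices ‖e‖ ^ 2 ≤ 0 by
    rw [← sub_eq_zero, ← norm_eq_zero]
    exact pow_eq_zero_iff two_ne_zero |>.1 (le_antisymm this (by positivity))
  have he : γ * ⟪f' (p y), e⟫ + ⟪p y - y, e⟫ = ‖e‖ ^ 2 := by
    rw [← real_inner_smul_left, ← inner_add_left, ← real_inner_self_eq_norm_sq]
    simp only [e]; abel_nf
  -- moving from `p y` along `-e` lowers the prox objective at first order by `t ‖e‖²`
  have key := nonneg_of_forall_nonneg_mul_add_sq_mul (a := -‖e‖ ^ 2)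
    (b := (γ * β + 1) / 2 * ‖e‖ ^ 2) fun t _ _ => by
    have hperturb := hp.zero_le_perturb y (-e) t
    have hquad := hsm (p y + t • -e) (p y)
    rw [add_sub_cancel_left, real_inner_smul_right, inner_neg_right, norm_smul, norm_neg,
      Real.norm_eq_abs, mul_pow, sq_abs] at hquad
    rw [inner_neg_right, norm_neg] at hperturb
    nlinarith [mul_le_mul_of_nonneg_left hquad hγ]
  linarith

lemma IsProx.norm_sub_le (hp : IsProx γ f p) (hγ : 0 ≤ γ) (hσ : 0 ≤ σ)
    (hsc : ∀ x y, f x ≥ f y + ⟪f' y, x - y⟫ + σ / 2 * ‖x - y‖ ^ 2)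
    (hsm : ∀ x y, f x ≤ f y + ⟪f' y, x - y⟫ + β / 2 * ‖x - y‖ ^ 2) (u v : H) :
    ‖p u - p v‖ ≤ 1 / (1 + γ * σ) * ‖u - v‖ := by
  have huv : u - v = (p u - p v) + γ • (f' (p u) - f' (p v)) := by
    conv_lhs => rw [← hp.add_smul_grad_eq hγ hsm u, ← hp.add_smul_grad_eq hγ hsm v]
    module
  have hmono := mul_norm_sub_sq_le_inner_of_strongConvex hsc (p u) (p v)
  have hinner : (1 + γ * σ) * ‖p u - p v‖ ^ 2 ≤ ‖u - v‖ * ‖p u - p v‖ := by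
    refine le_trans ?_ (real_inner_le_norm _ _)
    rw [huv, inner_add_left, real_inner_smul_left, real_inner_self_eq_norm_sq]
    nlinarith [mul_le_mul_of_nonneg_left hmono hγ]
  rw [one_div_mul_eq_div, le_div_iff₀ (by positivity)]
  rcases (norm_nonneg (p u - p v)).eq_or_lt with h0 | hpos
  · rw [← h0, zero_mul]; exact norm_nonneg _
  · nlinarith

lemma IsProx.norm_reflect_sub_le_max_mul (hp : IsProx γ f p) (hγ : 0 ≤ γ) (hσ : 0 ≤ σ)
    (hσβ : σ ≤ β) (hsc : ∀ x y, f x ≥ f y + ⟪f' y, x - y⟫ + σ / 2 * ‖x - y‖ ^ 2)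
    (hsm : ∀ x y, f x ≤ f y + ⟪f' y, x - y⟫ + β / 2 * ‖x - y‖ ^ 2) (u v : H) :
    ‖reflect p u - reflect p v‖ ≤
      max ((γ * β - 1) / (γ * β + 1)) ((1 - γ * σ) / (1 + γ * σ)) * ‖u - v‖ := by
  have hβ : 0 ≤ β := hσ.trans hσβ
  set a := p u - p v
  set d := f' (p u) - f' (p v)
  have hu := hp.add_smul_grad_eq hγ hsm u
  have hv := hp.add_smul_grad_eq hγ hsm v
  have huv : u - v = a + γ • d := by
    conv_lhs => rw [← hu, ← hv]
    module
  have hR : reflect p u - reflect p v = a - γ • d := by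
    rw [reflect_sub_reflect, huv]
    module
  refine norm_le_max_mul_norm_of_inner_add_smul_sub_smul_nonpos
    (div_add_div_nonneg_of_le (by positivity) (mul_le_mul_of_nonneg_left hσβ hγ)) ?_
  have hplus : a - γ • d + ((γ * β - 1) / (γ * β + 1)) • (a + γ • d)
      = (2 * γ / (γ * β + 1)) • (β • a - d) := by
    match_scalars <;> field_simp <;> ring
  have hminus : a - γ • d - ((1 - γ * σ) / (1 + γ * σ)) • (a + γ • d)
      = (-(2 * γ / (1 + γ * σ))) • (d - σ • a) := by
    match_scalars <;> field_simp <;> ring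
  rw [hR, huv, hplus, hminus, real_inner_smul_left, real_inner_smul_right, real_inner_comm]
  have hinterp := inner_sub_smul_nonneg_of_strongConvex_smooth hσβ hsc hsm (p u) (p v)
  have hk : 0 ≤ 2 * γ / (γ * β + 1) * (2 * γ / (1 + γ * σ)) := by positivity
  nlinarith

end InnerProduct

theorem douglasRachford_x_iterates_linear_convergence_general
    {H : Type*} [NormedAddCommGroup H] [InnerProductSpace ℝ H]
    (γ β σ : ℝ) (hγ : 0 < γ) (hσ : 0 < σ) (hβσ : σ ≤ β)
    (f : H → ℝ) (f' : H → H)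
    (hsc : ∀ x y, f x ≥ f y + ⟪f' y, x - y⟫ + σ / 2 * ‖x - y‖ ^ 2)
    (hsm : ∀ x y, f x ≤ f y + ⟪f' y, x - y⟫ + β / 2 * ‖x - y‖ ^ 2)
    (g : H → ℝ) (hg_conv : ConvexOn ℝ Set.univ g)
    (pf : H → H)
    (hpf : ∀ y x, γ * f (pf y) + (1 / 2) * ‖pf y - y‖ ^ 2 ≤ γ * f x + (1 / 2) * ‖x - y‖ ^ 2)
    (pg : H → H)
    (hpg : ∀ y x, γ * g (pg y) + (1 / 2) * ‖pg y - y‖ ^ 2 ≤ γ * g x + (1 / 2) * ‖x - y‖ ^ 2)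
    (Rf : H → H) (hRf : Rf = fun x => (2 : ℝ) • pf x - x)
    (Rg : H → H) (hRg : Rg = fun x => (2 : ℝ) • pg x - x)
    (δ : ℝ) (hδ : δ = max ((γ * β - 1) / (γ * β + 1)) ((1 - γ * σ) / (1 + γ * σ)))
    (α : ℝ) (hα₁ : 0 < α)
    (zbar : H) (hzbar : Rg (Rf zbar) = zbar)
    (z : ℕ → H) (hz : ∀ k, z (k + 1) = (1 - α) • z k + α • Rg (Rf (z k))) :
    ∀ k, ‖pf (z k) - pf zbar‖ ≤
      (|1 - α| + δ * α) ^ k * (1 / (1 + γ * σ)) * ‖z 0 - zbar‖ := by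
  intro k
  have hδ0 : 0 ≤ δ := by
    have hsum := div_add_div_nonneg_of_le (mul_nonneg hγ.le hσ.le)
      (mul_le_mul_of_nonneg_left hβσ hγ.le)
    rw [hδ]
    by_contra! hneg
    linarith [max_lt_iff.1 hneg]
  have hRf' : Rf = reflect pf := hRf
  have hRg' : Rg = reflect pg := hRg
  have hT : ∀ u, ‖Rg (Rf u) - zbar‖ ≤ δ * ‖u - zbar‖ := by
    intro u
    rw [hRf', hRg'] at hzbar ⊢
    calc ‖reflect pg (reflect pf u) - zbar‖
        = ‖reflect pg (reflect pf u) - reflect pg (reflect pf zbar)‖ := by rw [hzbar]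
      _ ≤ ‖reflect pf u - reflect pf zbar‖ := IsProx.norm_reflect_sub_le hpg hγ.le hg_conv _ _
      _ ≤ δ * ‖u - zbar‖ :=
        hδ ▸ IsProx.norm_reflect_sub_le_max_mul hpf hγ.le hσ.le hβσ hsc hsm _ _
  calc ‖pf (z k) - pf zbar‖ ≤ 1 / (1 + γ * σ) * ‖z k - zbar‖ :=
        IsProx.norm_sub_le hpf hγ.le hσ.le hsc hsm _ _
    _ ≤ 1 / (1 + γ * σ) * ((|1 - α| + δ * α) ^ k * ‖z 0 - zbar‖) := by
        gcongr
        exact norm_relaxed_iterate_sub_le hα₁.le hδ0 hT hz k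
    _ = (|1 - α| + δ * α) ^ k * (1 / (1 + γ * σ)) * ‖z 0 - zbar‖ := by ring

/-- R-linear convergence of the `x`-iterates `x^k = prox_{γf}(z^k)` of the
Douglas–Rachford algorithm towards `x* = prox_{γf}(z̄)`. -/
theorem douglasRachford_x_iterates_linear_convergence
    {H : Type*} [NormedAddCommGroup H] [InnerProductSpace ℝ H] [CompleteSpace H]
    (γ β σ : ℝ) (hγ : 0 < γ) (hσ : 0 < σ) (hβσ : σ ≤ β)
    (f : H → ℝ) (f' : H → H) (hf' : ∀ x, HasGradientAt f (f' x) x)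
    (hsc : ∀ x y, f x ≥ f y + ⟪f' y, x - y⟫ + σ / 2 * ‖x - y‖ ^ 2)
    (hsm : ∀ x y, f x ≤ f y + ⟪f' y, x - y⟫ + β / 2 * ‖x - y‖ ^ 2)
    (g : H → ℝ) (hg_conv : ConvexOn ℝ Set.univ g) (hg_cont : Continuous g)
    (pf : H → H)
    (hpf : ∀ y x, γ * f (pf y) + (1 / 2) * ‖pf y - y‖ ^ 2 ≤ γ * f x + (1 / 2) * ‖x - y‖ ^ 2)
    (pg : H → H)
    (hpg : ∀ y x, γ * g (pg y) + (1 / 2) * ‖pg y - y‖ ^ 2 ≤ γ * g x + (1 / 2) * ‖x - y‖ ^ 2)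
    (Rf : H → H) (hRf : Rf = fun x => (2 : ℝ) • pf x - x)
    (Rg : H → H) (hRg : Rg = fun x => (2 : ℝ) • pg x - x)
    (δ : ℝ) (hδ : δ = max ((γ * β - 1) / (γ * β + 1)) ((1 - γ * σ) / (1 + γ * σ)))
    (α : ℝ) (hα₁ : 0 < α) (hα₂ : α < 2 / (1 + δ))
    (zbar : H) (hzbar : Rg (Rf zbar) = zbar)
    (z : ℕ → H) (hz : ∀ k, z (k + 1) = (1 - α) • z k + α • Rg (Rf (z k))) :
    ∀ k, ‖pf (z k) - pf zbar‖ ≤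
      (|1 - α| + δ * α) ^ k * (1 / (1 + γ * σ)) * ‖z 0 - zbar‖ :=
  douglasRachford_x_iterates_linear_convergence_general γ β σ hγ hσ hβσ f f' hsc hsm g hg_conv pf
    hpf pg hpg Rf hRf Rg hRg δ hδ α hα₁ zbar hzbar z hz
end

section
/- Let H be a real Hilbert space, let γ > 0 and σ > 0, and let f : H → ℝ be convex, continuous and σ-strongly convex (i.e. f − (σ/2)‖·‖² is convex). Let p : H → H be the proximal operator prox_{γf}. Then p is (1/(1+γσ))-Lipschitz: ‖p(x) − p(y)‖ ≤ (1/(1+γσ))·‖x − y‖ for all x, y ∈ H. -/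
open scoped RealInnerProductSpace
open Filter Topology

/-!
The proximal objective `u ↦ γ f u + ½‖u - w‖²` is `(1 + γσ)`-strongly convex, so it grows at
least like `(1 + γσ)/2 ‖u - p w‖²` away from its minimizer `p w`. Comparing the objectives for
`x` and `y` at each other's minimizers and adding the two inequalities gives
`(1 + γσ) ‖p x - p y‖² ≤ ⟪p x - p y, x - y⟫`, and Cauchy–Schwarz concludes.
-/

section NormedSpace

variable {E : Type*} [NormedAddCommGroup E] [NormedSpace ℝ E] {s : Set E} {φ : ℝ → ℝ}
  {f : E → ℝ} {m c : ℝ}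

lemma UniformConvexOn.smul (hf : UniformConvexOn s φ f) (hc : 0 ≤ c) :
    UniformConvexOn s (c • φ) (c • f) := by
  refine ⟨hf.1, fun x hx y hy a b ha hb hab ↦ ?_⟩
  have := mul_le_mul_of_nonneg_left (hf.2 hx hy ha hb hab) hc
  simp only [Pi.smul_apply, smul_eq_mul] at this ⊢
  linarith

lemma StrongConvexOn.smul (hf : StrongConvexOn s m f) (hc : 0 ≤ c) :
    StrongConvexOn s (c * m) (c • f) := by
  unfold StrongConvexOn
  convert UniformConvexOn.smul hf hc using 1
  funext r
  simp only [Pi.smul_apply, smul_eq_mul]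
  ring

lemma StrongConvexOn.add_sq_norm_sub_le_of_isMinOn {z x : E} (hf : StrongConvexOn s m f)
    (hmin : IsMinOn f s z) (hz : z ∈ s) (hx : x ∈ s) :
    f z + m / 2 * ‖x - z‖ ^ 2 ≤ f x := by
  have hbound : ∀ t ∈ Set.Ioo (0 : ℝ) 1, (1 - t) * (m / 2 * ‖x - z‖ ^ 2) ≤ f x - f z := by
    rintro t ⟨ht0, ht1⟩
    have hconv := hf.2 hx hz ht0.le (sub_nonneg.2 ht1.le) (add_sub_cancel t 1)
    have hle := hmin (hf.1 hx hz ht0.le (sub_nonneg.2 ht1.le) (add_sub_cancel t 1))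
    simp only [Set.mem_ofPred_eq, smul_eq_mul] at hle hconv
    have : t * ((1 - t) * (m / 2 * ‖x - z‖ ^ 2)) ≤ t * (f x - f z) := by nlinarith
    exact le_of_mul_le_mul_left this ht0
  have hlim : Tendsto (fun t : ℝ ↦ (1 - t) * (m / 2 * ‖x - z‖ ^ 2)) (𝓝[>] 0)
      (𝓝 (m / 2 * ‖x - z‖ ^ 2)) := by
    have : Continuous fun t : ℝ ↦ (1 - t) * (m / 2 * ‖x - z‖ ^ 2) := by fun_prop
    simpa using this.continuousWithinAt (s := Set.Ioi 0) (x := 0) |>.tendsto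
  linarith [le_of_tendsto hlim (eventually_of_mem (Ioo_mem_nhdsGT one_pos) hbound)]

lemma StrongConvexOn.add {g : E → ℝ} {n : ℝ} (hf : StrongConvexOn s m f)
    (hg : StrongConvexOn s n g) : StrongConvexOn s (m + n) (f + g) := by
  unfold StrongConvexOn
  convert UniformConvexOn.add hf hg using 1
  funext r
  simp only [Pi.add_apply]
  ring

end NormedSpace

section InnerProductSpace

variable {E : Type*} [NormedAddCommGroup E] [InnerProductSpace ℝ E]

lemma strongConvexOn_half_sq_norm_sub (w : E) :
    StrongConvexOn Set.univ 1 fun u : E ↦ 1 / 2 * ‖u - w‖ ^ 2 := by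
  refine strongConvexOn_iff_convex.2 ?_
  have haffine : (fun u : E ↦ 1 / 2 * ‖u - w‖ ^ 2 - 1 / 2 * ‖u‖ ^ 2)
      = fun u ↦ innerSL ℝ (-w) u + 1 / 2 * ‖w‖ ^ 2 := by
    funext u
    rw [norm_sub_sq_real, innerSL_apply_apply, inner_neg_left, real_inner_comm]
    ring
  rw [haffine]
  exact ((innerSL ℝ (-w)).toLinearMap.convexOn convex_univ).add_const _

lemma mul_norm_sub_sq_le_inner_of_quadraticGrowth (g : E → ℝ) (μ : ℝ) (p : E → E)
    (hp : ∀ w u, g (p w) + 1 / 2 * ‖p w - w‖ ^ 2 + μ / 2 * ‖u - p w‖ ^ 2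
      ≤ g u + 1 / 2 * ‖u - w‖ ^ 2) (x y : E) :
    μ * ‖p x - p y‖ ^ 2 ≤ ⟪p x - p y, x - y⟫ := by
  have h1 := hp x (p y)
  have h2 := hp y (p x)
  simp only [norm_sub_sq_real, inner_sub_left, inner_sub_right, real_inner_comm (p x) (p y),
    real_inner_comm x (p y), real_inner_comm y (p x)] at h1 h2 ⊢
  nlinarith

lemma mul_norm_le_of_mul_sq_norm_le_inner {a b : E} {μ : ℝ} (h : μ * ‖a‖ ^ 2 ≤ ⟪a, b⟫) :
    μ * ‖a‖ ≤ ‖b‖ := by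
  rcases (norm_nonneg a).eq_or_lt with ha | ha
  · simp [← ha]
  · refine le_of_mul_le_mul_right ?_ ha
    nlinarith [real_inner_le_norm a b]

end InnerProductSpace

theorem prox_lipschitz_of_stronglyConvex_general
    {H : Type*} [NormedAddCommGroup H] [InnerProductSpace ℝ H]
    (γ σ : ℝ) (hγ : 0 < γ) (hσ : 0 < σ)
    (f : H → ℝ)
    (hf_sc : ConvexOn ℝ Set.univ (fun x => f x - σ / 2 * ‖x‖ ^ 2))
    (p : H → H)
    (hp : ∀ y x, γ * f (p y) + (1 / 2) * ‖p y - y‖ ^ 2 ≤ γ * f x + (1 / 2) * ‖x - y‖ ^ 2) :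
    ∀ x y, ‖p x - p y‖ ≤ (1 / (1 + γ * σ)) * ‖x - y‖ := by
  intro x y
  have hobj (w : H) :
      StrongConvexOn Set.univ (1 + γ * σ) fun u ↦ γ * f u + 1 / 2 * ‖u - w‖ ^ 2 := by
    rw [add_comm]
    exact ((strongConvexOn_iff_convex.2 hf_sc).smul hγ.le).add (strongConvexOn_half_sq_norm_sub w)
  have hgrowth (w u : H) :
      γ * f (p w) + 1 / 2 * ‖p w - w‖ ^ 2 + (1 + γ * σ) / 2 * ‖u - p w‖ ^ 2
        ≤ γ * f u + 1 / 2 * ‖u - w‖ ^ 2 :=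
    (hobj w).add_sq_norm_sub_le_of_isMinOn (fun v _ ↦ hp w v) trivial trivial
  have hlip := mul_norm_le_of_mul_sq_norm_le_inner
    (mul_norm_sub_sq_le_inner_of_quadraticGrowth (fun u ↦ γ * f u) _ p hgrowth x y)
  rw [one_div_mul_eq_div, le_div_iff₀ (by positivity), mul_comm]
  exact hlip

/-- The proximal operator of a `σ`-strongly convex function is
`1/(1+γσ)`-Lipschitz continuous. -/
theorem prox_lipschitz_of_stronglyConvex
    {H : Type*} [NormedAddCommGroup H] [InnerProductSpace ℝ H] [CompleteSpace H]
    (γ σ : ℝ) (hγ : 0 < γ) (hσ : 0 < σ)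
    (f : H → ℝ) (hf_conv : ConvexOn ℝ Set.univ f) (hf_cont : Continuous f)
    (hf_sc : ConvexOn ℝ Set.univ (fun x => f x - σ / 2 * ‖x‖ ^ 2))
    (p : H → H)
    (hp : ∀ y x, γ * f (p y) + (1 / 2) * ‖p y - y‖ ^ 2 ≤ γ * f x + (1 / 2) * ‖x - y‖ ^ 2) :
    ∀ x y, ‖p x - p y‖ ≤ (1 / (1 + γ * σ)) * ‖x - y‖ :=
  prox_lipschitz_of_stronglyConvex_general γ σ hγ hσ f hf_sc p hp
end

section
/- Let β ≥ σ > 0. For γ > 0 define δ(γ) := max((γβ − 1)/(γβ + 1), (1 − γσ)/(1 + γσ)). Then for every γ > 0 and every α > 0, the convergence-rate factor satisfies |1 − α| + α·δ(γ) ≥ (√(β/σ) − 1)/(√(β/σ) + 1), and equality holds for the optimal parameters α = 1 and γ = 1/√(σβ); that is, min over γ > 0 and α > 0 of |1 − α| + α·δ(γ) equals (√(β/σ) − 1)/(√(β/σ) + 1), attained at α = 1, γ = 1/√(σβ). -/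
/-!
Write `x = γβ` and `y = γσ`, so that `x / y = β / σ =: r²`. Since `t ↦ (t - 1)/(t + 1)` is increasing
and `(1 - y)/(1 + y) = (y⁻¹ - 1)/(y⁻¹ + 1)`, the factor `δ(γ)` is at least `(r - 1)/(r + 1)`:
either `r ≤ x`, or `x < r` forces `r ≤ y⁻¹` because `r² y = x`. Both terms equal `(r - 1)/(r + 1)`
when `x y = 1`, i.e. `γ = 1/√(σβ)`. Finally `|1 - α| + α δ ≥ δ` for every `α`, as `|δ| < 1`.
-/

open Real

lemma sub_one_div_add_one_le_sub_one_div_add_one {a b : ℝ} (ha : -1 < a) (hab : a ≤ b) :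
    (a - 1) / (a + 1) ≤ (b - 1) / (b + 1) := by
  rw [div_le_div_iff₀ (by linarith) (by linarith)]
  nlinarith

lemma sub_one_div_add_one_mem_Ioo {x : ℝ} (hx : 0 < x) : (x - 1) / (x + 1) ∈ Set.Ioo (-1) 1 := by
  constructor
  · rw [lt_div_iff₀ (by linarith)]; linarith
  · rw [div_lt_one (by linarith)]; linarith

lemma one_sub_div_one_add_eq_inv_sub_one_div_inv_add_one {y : ℝ} (hy : 0 < y) :
    (1 - y) / (1 + y) = (y⁻¹ - 1) / (y⁻¹ + 1) := by
  field_simp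

lemma max_sub_one_div_add_one_mem_Ioo {x y : ℝ} (hx : 0 < x) (hy : 0 < y) :
    max ((x - 1) / (x + 1)) ((1 - y) / (1 + y)) ∈ Set.Ioo (-1) 1 := by
  rw [one_sub_div_one_add_eq_inv_sub_one_div_inv_add_one hy]
  obtain ⟨hx₁, hx₂⟩ := sub_one_div_add_one_mem_Ioo hx
  obtain ⟨hy₁, hy₂⟩ := sub_one_div_add_one_mem_Ioo (inv_pos.mpr hy)
  exact ⟨lt_max_of_lt_left hx₁, max_lt hx₂ hy₂⟩

lemma sqrt_div_sub_one_div_add_one_le_max {x y : ℝ} (hx : 0 < x) (hy : 0 < y) :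
    (√(x / y) - 1) / (√(x / y) + 1) ≤ max ((x - 1) / (x + 1)) ((1 - y) / (1 + y)) := by
  set r := √(x / y)
  have hr : 0 < r := sqrt_pos.mpr (div_pos hx hy)
  have hr_sq : r ^ 2 * y = x := by
    rw [sq_sqrt (div_pos hx hy).le, div_mul_cancel₀ _ hy.ne']
  rcases le_or_gt r x with hrx | hxr
  · exact le_max_of_le_left (sub_one_div_add_one_le_sub_one_div_add_one (by linarith) hrx)
  · have hry : r ≤ y⁻¹ := by
      rw [le_inv_comm₀ hr hy, inv_eq_one_div, le_div_iff₀ hr]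
      nlinarith
    rw [one_sub_div_one_add_eq_inv_sub_one_div_inv_add_one hy]
    exact le_max_of_le_right (sub_one_div_add_one_le_sub_one_div_add_one (by linarith) hry)

lemma max_sub_one_div_add_one_of_mul_eq_one {x y : ℝ} (hx : 0 < x) (hxy : x * y = 1) :
    max ((x - 1) / (x + 1)) ((1 - y) / (1 + y)) = (√(x / y) - 1) / (√(x / y) + 1) := by
  have hy : y = x⁻¹ := eq_inv_of_mul_eq_one_right hxy
  have hr : √(x / y) = x := by rw [hy, div_inv_eq_mul, ← sq, sqrt_sq hx.le]
  rw [hr, one_sub_div_one_add_eq_inv_sub_one_div_inv_add_one (hy ▸ inv_pos.mpr hx), hy, inv_inv,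
    max_self]

lemma le_abs_one_sub_add_mul {m α : ℝ} (hm : m ∈ Set.Icc (-1) 1) :
    m ≤ |1 - α| + α * m := by
  obtain ⟨hm₁, hm₂⟩ := hm
  rcases le_or_gt α 1 with h | h
  · rw [abs_of_nonneg (by linarith)]
    nlinarith
  · rw [abs_of_neg (by linarith)]
    nlinarith

/-- Optimal parameter selection for Douglas–Rachford splitting: the rate factor
`|1−α| + α·δ(γ)` is minimized over `γ > 0`, `α > 0` by `α = 1`, `γ = 1/√(σβ)`,
with optimal value `(√(β/σ)−1)/(√(β/σ)+1)`. -/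
theorem douglasRachford_optimal_parameters (β σ : ℝ) (hσ : 0 < σ) (hβσ : σ ≤ β) :
    (∀ γ α : ℝ, 0 < γ → 0 < α →
        (Real.sqrt (β / σ) - 1) / (Real.sqrt (β / σ) + 1) ≤
          |1 - α| + α * max ((γ * β - 1) / (γ * β + 1)) ((1 - γ * σ) / (1 + γ * σ)))
      ∧ |1 - (1 : ℝ)| + 1 *
            max ((1 / Real.sqrt (σ * β) * β - 1) / (1 / Real.sqrt (σ * β) * β + 1))
              ((1 - 1 / Real.sqrt (σ * β) * σ) / (1 + 1 / Real.sqrt (σ * β) * σ)) =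
          (Real.sqrt (β / σ) - 1) / (Real.sqrt (β / σ) + 1) := by
  have hβ : 0 < β := hσ.trans_le hβσ
  have ratio_eq {γ : ℝ} (hγ : 0 < γ) : γ * β / (γ * σ) = β / σ := mul_div_mul_left _ _ hγ.ne'
  constructor
  · intro γ α hγ _
    have hx := mul_pos hγ hβ
    have hy := mul_pos hγ hσ
    rw [← ratio_eq hγ]
    exact (sqrt_div_sub_one_div_add_one_le_max hx hy).trans
      (le_abs_one_sub_add_mul (Set.Ioo_subset_Icc_self (max_sub_one_div_add_one_mem_Ioo hx hy)))
  · have hs : 0 < √(σ * β) := sqrt_pos.mpr (mul_pos hσ hβ)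
    have hγ : 0 < 1 / √(σ * β) := one_div_pos.mpr hs
    have hxy : 1 / √(σ * β) * β * (1 / √(σ * β) * σ) = 1 := by
      field_simp
      rw [sq_sqrt (mul_pos hσ hβ).le, mul_comm]
    rw [sub_self, abs_zero, zero_add, one_mul, ← ratio_eq hγ,
      max_sub_one_div_add_one_of_mul_eq_one (mul_pos hγ hβ) hxy]
end

section
/- Let β ≥ σ > 0 and γ > 0, and set δ := max((γβ − 1)/(γβ + 1), (1 − γσ)/(1 + γσ)). For every α ∈ (0, 2/(1+δ)): max( |1 − α + α(1 − γσ)/(1 + γσ)|, |1 − α − α(1 − γσ)/(1 + γσ)|, |1 − α + α(1 − γβ)/(1 + γβ)|, |1 − α − α(1 − γβ)/(1 + γβ)| ) = |1 − α| + α·δ. (These four numbers are the exact one-step contraction factors of the Douglas–Rachford algorithm on the four test problems built from f(x) = (1/2)(βx₁² + σx₂²) on ℝ² together with g ≡ 0 or g the indicator of {0}; hence the rate bound |1 − α| + αδ is tight over the class of σ-strongly convex, β-smooth f.) -/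
/-! Writing `s` and `b` for the factors `(1 - γλ)/(1 + γλ)` at `λ = σ` and `λ = β`, the identity
`max |x + y| |x - y| = |x| + |y|` collapses the four contraction factors to
`|1 - α| + α * max |s| |b|`. Since `t ↦ (1 - t)/(1 + t)` is decreasing, `b ≤ s`, so
`max |s| |b| = max (-b) s`, which is `δ`. -/

theorem max_abs_add_abs_sub {G : Type*} [AddCommGroup G] [LinearOrder G] [IsOrderedAddMonoid G]
    (a b : G) : max |a + b| |a - b| = |a| + |b| := by
  simp only [abs_eq_max_neg]
  grind

theorem max_abs_abs_of_le {G : Type*} [AddCommGroup G] [LinearOrder G] [IsOrderedAddMonoid G]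
    {a b : G} (h : b ≤ a) : max |a| |b| = max (-b) a := by
  simp only [abs_eq_max_neg]
  grind

theorem one_sub_div_one_add_le_of_le {s t : ℝ} (hs : -1 < s) (hst : s ≤ t) :
    (1 - t) / (1 + t) ≤ (1 - s) / (1 + s) := by
  rw [div_le_div_iff₀ (by linarith) (by linarith)]
  nlinarith

theorem max_abs_relaxed_factors {α s b : ℝ} (hα : 0 ≤ α) (hbs : b ≤ s) :
    max (max |1 - α + α * s| |1 - α - α * s|) (max |1 - α + α * b| |1 - α - α * b|)
      = |1 - α| + α * max (-b) s := by
  simp only [max_abs_add_abs_sub, abs_mul, abs_of_nonneg hα]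
  rw [max_add_add_left, ← mul_max_of_nonneg _ _ hα, max_abs_abs_of_le hbs]

theorem douglasRachford_rate_tight_general (β σ γ δ α : ℝ)
    (hσ : 0 < σ) (hβσ : σ ≤ β) (hγ : 0 < γ)
    (hδ : δ = max ((γ * β - 1) / (γ * β + 1)) ((1 - γ * σ) / (1 + γ * σ)))
    (hα₁ : 0 < α) :
    max
        (max |1 - α + α * (1 - γ * σ) / (1 + γ * σ)| |1 - α - α * (1 - γ * σ) / (1 + γ * σ)|)
        (max |1 - α + α * (1 - γ * β) / (1 + γ * β)| |1 - α - α * (1 - γ * β) / (1 + γ * β)|)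
      = |1 - α| + α * δ := by
  have hβ_le_σ : (1 - γ * β) / (1 + γ * β) ≤ (1 - γ * σ) / (1 + γ * σ) :=
    one_sub_div_one_add_le_of_le (by nlinarith) (by gcongr)
  have hδ_eq : δ = max (-((1 - γ * β) / (1 + γ * β))) ((1 - γ * σ) / (1 + γ * σ)) := by
    rw [hδ, ← neg_div, neg_sub, add_comm (γ * β)]
  simp only [mul_div_assoc]
  rw [max_abs_relaxed_factors hα₁.le hβ_le_σ, hδ_eq]

/-- Tightness of the Douglas–Rachford rate bound: for `α ∈ (0, 2/(1+δ))` the largest of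
the four exact per-iteration contraction factors of the test problems equals
`|1−α| + α·δ`. -/
theorem douglasRachford_rate_tight (β σ γ δ α : ℝ)
    (hσ : 0 < σ) (hβσ : σ ≤ β) (hγ : 0 < γ)
    (hδ : δ = max ((γ * β - 1) / (γ * β + 1)) ((1 - γ * σ) / (1 + γ * σ)))
    (hα₁ : 0 < α) (hα₂ : α < 2 / (1 + δ)) :
    max
        (max |1 - α + α * (1 - γ * σ) / (1 + γ * σ)| |1 - α - α * (1 - γ * σ) / (1 + γ * σ)|)
        (max |1 - α + α * (1 - γ * β) / (1 + γ * β)| |1 - α - α * (1 - γ * β) / (1 + γ * β)|)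
      = |1 - α| + α * δ :=
  douglasRachford_rate_tight_general β σ γ δ α hσ hβσ hγ hδ hα₁
end

section
/- Let β ≥ σ > 0, γ > 0 and α ∈ ℝ. Define f : ℝ² → ℝ (Euclidean) by f(x) = (1/2)(βx₁² + σx₂²). Then: (a) f is σ-strongly convex and β-smooth; (b) for every y ∈ ℝ², the unique minimizer of x ↦ γf(x) + (1/2)‖x − y‖² is prox_{γf}(y) = (y₁/(1+γβ), y₂/(1+γσ)), so the reflected proximal operator is R_{γf}(y) = (((1−γβ)/(1+γβ))y₁, ((1−γσ)/(1+γσ))y₂); (c) the Douglas–Rachford operator for the pair (f, g ≡ 0), namely T := (1−α)·Id + α·R_{γf} (since R_{γg} = Id for g ≡ 0), satisfies T(z) = ((1 − α + α(1−γβ)/(1+γβ))·z₁, (1 − α + α(1−γσ)/(1+γσ))·z₂) for all z; consequently, starting from z⁰ = (0, 1), the iterates z^{k+1} = T(z^k) satisfy ‖z^k‖ = |1 − α + α(1−γσ)/(1+γσ)|^k, with 0 a fixed point of R_{γg} ∘ R_{γf}. -/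
/-!
Everything is diagonal. For `f(x) = ½ Σ dᵢ xᵢ²`, subtracting `(s/2)‖x‖²` gives the diagonal
quadratic with weights `dᵢ - s`, which is convex once every weight is nonnegative. Completing
the square coordinatewise gives
`γ f(x) + ½‖x - y‖² = γ f(p) + ½‖p - y‖² + ½ Σ (1 + γ dᵢ)(xᵢ - pᵢ)²` with `pᵢ = yᵢ / (1 + γ dᵢ)`,
so `p` is the unique minimizer. Then `R_{γf}` and the Douglas–Rachford operator are diagonal too, the
starting point `(0, 1)` spans an eigenline of the latter, and the iterates are `cᵏ (0, 1)`.
-/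

open Finset

theorem convexOn_finset_sum {𝕜 E β ι : Type*} [Semiring 𝕜] [PartialOrder 𝕜] [AddCommMonoid E]
    [SMul 𝕜 E] [AddCommMonoid β] [PartialOrder β] [IsOrderedAddMonoid β] [Module 𝕜 β]
    {s : Set E} (hs : Convex 𝕜 s) (t : Finset ι) (f : ι → E → β)
    (hf : ∀ i ∈ t, ConvexOn 𝕜 s (f i)) :
    ConvexOn 𝕜 s (fun x => ∑ i ∈ t, f i x) := by
  classical
  induction t using Finset.induction_on with
  | empty => simpa using convexOn_const (0 : β) hs
  | insert j t hj ih =>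
    simp only [sum_insert hj]
    exact (hf j (mem_insert_self j t)).add (ih fun i hi => hf i (mem_insert_of_mem hi))

noncomputable section

variable {ι : Type*} [Fintype ι]

def diagQuadratic (d : ι → ℝ) (x : EuclideanSpace ℝ ι) : ℝ := 1 / 2 * ∑ i, d i * x i ^ 2

def proxObjective {E : Type*} [NormedAddCommGroup E] (γ : ℝ) (h : E → ℝ) (y x : E) : ℝ :=
  γ * h x + 1 / 2 * ‖x - y‖ ^ 2

def diagProx (γ : ℝ) (d : ι → ℝ) (y : EuclideanSpace ℝ ι) : EuclideanSpace ℝ ι :=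
  WithLp.toLp 2 fun i => y i / (1 + γ * d i)

theorem convexOn_diagQuadratic {d : ι → ℝ} (hd : ∀ i, 0 ≤ d i) :
    ConvexOn ℝ Set.univ (diagQuadratic d) := by
  refine (convexOn_finset_sum convex_univ univ _ fun i _ => ?_).smul (by norm_num)
  have hsq := ((even_two.convexOn_pow (𝕜 := ℝ)).smul (hd i)).comp_linearMap
    (EuclideanSpace.proj i : EuclideanSpace ℝ ι →L[ℝ] ℝ).toLinearMap
  exact hsq

theorem diagQuadratic_sub_norm_sq (d : ι → ℝ) (s : ℝ) (x : EuclideanSpace ℝ ι) :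
    diagQuadratic d x - s / 2 * ‖x‖ ^ 2 = diagQuadratic (fun i => d i - s) x := by
  simp only [diagQuadratic, EuclideanSpace.real_norm_sq_eq, mul_sum, ← sum_sub_distrib]
  congr 1; ext i; ring

theorem norm_sq_sub_diagQuadratic (d : ι → ℝ) (b : ℝ) (x : EuclideanSpace ℝ ι) :
    b / 2 * ‖x‖ ^ 2 - diagQuadratic d x = diagQuadratic (fun i => b - d i) x := by
  simp only [diagQuadratic, EuclideanSpace.real_norm_sq_eq, mul_sum, ← sum_sub_distrib]
  congr 1; ext i; ring

theorem convexOn_diagQuadratic_sub_norm_sq {d : ι → ℝ} {s : ℝ} (hs : ∀ i, s ≤ d i) :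
    ConvexOn ℝ Set.univ fun x => diagQuadratic d x - s / 2 * ‖x‖ ^ 2 := by
  simpa only [diagQuadratic_sub_norm_sq] using
    convexOn_diagQuadratic fun i => sub_nonneg.2 (hs i)

theorem convexOn_norm_sq_sub_diagQuadratic {d : ι → ℝ} {b : ℝ} (hb : ∀ i, d i ≤ b) :
    ConvexOn ℝ Set.univ fun x => b / 2 * ‖x‖ ^ 2 - diagQuadratic d x := by
  simpa only [norm_sq_sub_diagQuadratic] using
    convexOn_diagQuadratic fun i => sub_nonneg.2 (hb i)

theorem mul_sq_add_sub_sq_eq {γ c y : ℝ} (h : 1 + γ * c ≠ 0) (t : ℝ) :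
    γ * c * t ^ 2 + (t - y) ^ 2 = γ * c * (y / (1 + γ * c)) ^ 2 + (y / (1 + γ * c) - y) ^ 2
      + (1 + γ * c) * (t - y / (1 + γ * c)) ^ 2 := by
  field_simp
  ring

theorem proxObjective_diagQuadratic {γ : ℝ} {d : ι → ℝ} (h : ∀ i, 1 + γ * d i ≠ 0)
    (y x : EuclideanSpace ℝ ι) :
    proxObjective γ (diagQuadratic d) y x = proxObjective γ (diagQuadratic d) y (diagProx γ d y)
      + 1 / 2 * ∑ i, (1 + γ * d i) * (x i - diagProx γ d y i) ^ 2 := by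
  have hsplit : ∀ z : EuclideanSpace ℝ ι, proxObjective γ (diagQuadratic d) y z
      = 1 / 2 * ∑ i, (γ * d i * z i ^ 2 + (z i - y i) ^ 2) := by
    intro z
    simp only [proxObjective, diagQuadratic, EuclideanSpace.real_norm_sq_eq, PiLp.sub_apply,
      mul_sum, ← sum_add_distrib]
    exact sum_congr rfl fun i _ => by ring
  rw [hsplit, hsplit, ← mul_add, ← sum_add_distrib]
  congr 1
  exact sum_congr rfl fun i _ => mul_sq_add_sub_sq_eq (h i) (x i)

theorem proxObjective_diagProx_le {γ : ℝ} {d : ι → ℝ} (h : ∀ i, 0 < 1 + γ * d i)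
    (y x : EuclideanSpace ℝ ι) :
    proxObjective γ (diagQuadratic d) y (diagProx γ d y) ≤ proxObjective γ (diagQuadratic d) y x := by
  rw [proxObjective_diagQuadratic (fun i => (h i).ne') y x, le_add_iff_nonneg_right]
  exact mul_nonneg (by norm_num) (sum_nonneg fun i _ => mul_nonneg (h i).le (sq_nonneg _))

theorem eq_diagProx_of_proxObjective_le {γ : ℝ} {d : ι → ℝ} (h : ∀ i, 0 < 1 + γ * d i)
    {y x : EuclideanSpace ℝ ι}
    (hx : proxObjective γ (diagQuadratic d) y x ≤
      proxObjective γ (diagQuadratic d) y (diagProx γ d y)) :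
    x = diagProx γ d y := by
  rw [proxObjective_diagQuadratic (fun i => (h i).ne') y x, add_le_iff_nonpos_right] at hx
  have hterm : ∀ i ∈ univ, 0 ≤ (1 + γ * d i) * (x i - diagProx γ d y i) ^ 2 :=
    fun i _ => mul_nonneg (h i).le (sq_nonneg _)
  have hzero := (sum_eq_zero_iff_of_nonneg hterm).1 (by linarith [sum_nonneg hterm])
  ext i
  simpa [(h i).ne', sub_eq_zero] using hzero i (mem_univ i)


end

theorem two_mul_div_one_add_sub {a : ℝ} (h : 1 + a ≠ 0) (y : ℝ) :
    2 * (y / (1 + a)) - y = (1 - a) / (1 + a) * y := by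
  field_simp
  ring

theorem eq_pow_smul_of_map_smul {M E : Type*} [Monoid M] [MulAction M E] {T : E → E} {v : E}
    {c : M} (hT : ∀ t : M, T (t • v) = (c * t) • v) {z : ℕ → E} (hz₀ : z 0 = v)
    (hz : ∀ k, z (k + 1) = T (z k)) (k : ℕ) : z k = c ^ k • v := by
  induction k with
  | zero => simp [hz₀]
  | succ k ih => rw [hz, ih, hT, pow_succ']

/-- The two-dimensional test problem `f(x) = (1/2)(βx₁² + σx₂²)` with `g ≡ 0`:
`f` is `σ`-strongly convex and `β`-smooth, its proximal and reflected proximal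
operators are diagonal, the Douglas–Rachford operator is diagonal, and from
`z⁰ = (0,1)` the iterates contract exactly with factor `|1 − α + α(1−γσ)/(1+γσ)|`. -/
theorem douglasRachford_test_problem_g_zero (β σ γ α : ℝ)
    (hσ : 0 < σ) (hβσ : σ ≤ β) (hγ : 0 < γ)
    (f : EuclideanSpace ℝ (Fin 2) → ℝ)
    (hf : f = fun x => (1 / 2) * (β * (x 0) ^ 2 + σ * (x 1) ^ 2))
    (pr : EuclideanSpace ℝ (Fin 2) → EuclideanSpace ℝ (Fin 2))
    (hpr : pr = fun y => !₂[y 0 / (1 + γ * β), y 1 / (1 + γ * σ)])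
    (Rf : EuclideanSpace ℝ (Fin 2) → EuclideanSpace ℝ (Fin 2))
    (hRf : Rf = fun y => (2 : ℝ) • pr y - y)
    (T : EuclideanSpace ℝ (Fin 2) → EuclideanSpace ℝ (Fin 2))
    (hT : T = fun z => (1 - α) • z + α • Rf z) :
    -- (a) σ-strong convexity and β-smoothness of f
    (ConvexOn ℝ Set.univ (fun x : EuclideanSpace ℝ (Fin 2) => f x - σ / 2 * ‖x‖ ^ 2)
      ∧ ConvexOn ℝ Set.univ (fun x : EuclideanSpace ℝ (Fin 2) => β / 2 * ‖x‖ ^ 2 - f x))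
    -- (b) pr is the unique minimizer defining prox_{γf}, and R_{γf} is diagonal
    ∧ (∀ y, (∀ x, γ * f (pr y) + (1 / 2) * ‖pr y - y‖ ^ 2 ≤ γ * f x + (1 / 2) * ‖x - y‖ ^ 2)
        ∧ ∀ x, (∀ x', γ * f x + (1 / 2) * ‖x - y‖ ^ 2 ≤ γ * f x' + (1 / 2) * ‖x' - y‖ ^ 2) →
            x = pr y)
    ∧ (∀ y, Rf y = !₂[(1 - γ * β) / (1 + γ * β) * y 0, (1 - γ * σ) / (1 + γ * σ) * y 1])
    -- (c) the Douglas–Rachford operator (with R_{γg} = Id since g ≡ 0) and its iterates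
    ∧ (∀ z, T z = !₂[(1 - α + α * (1 - γ * β) / (1 + γ * β)) * z 0,
        (1 - α + α * (1 - γ * σ) / (1 + γ * σ)) * z 1])
    ∧ Rf 0 = 0
    ∧ ∀ z : ℕ → EuclideanSpace ℝ (Fin 2), z 0 = !₂[0, 1] →
        (∀ k, z (k + 1) = T (z k)) →
        ∀ k, ‖z k‖ = |1 - α + α * (1 - γ * σ) / (1 + γ * σ)| ^ k := by
  have hβ₁ : 0 < 1 + γ * β := by nlinarith
  have hσ₁ : 0 < 1 + γ * σ := by positivity
  have hd : ∀ i, 0 < 1 + γ * ![β, σ] i := fun i => by fin_cases i; exacts [hβ₁, hσ₁]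
  have hf' : f = diagQuadratic ![β, σ] := by
    subst hf; funext x; simp [diagQuadratic, Fin.sum_univ_two]
  have hpr' : pr = diagProx γ ![β, σ] := by
    subst hpr; funext y; ext i; fin_cases i <;> rfl
  have hRf' : ∀ y, Rf y = !₂[(1 - γ * β) / (1 + γ * β) * y 0, (1 - γ * σ) / (1 + γ * σ) * y 1] := by
    intro y; rw [hRf, hpr]; ext i; fin_cases i
    · simpa using two_mul_div_one_add_sub hβ₁.ne' (y 0)
    · simpa using two_mul_div_one_add_sub hσ₁.ne' (y 1)
  have hT' : ∀ z, T z = !₂[(1 - α + α * (1 - γ * β) / (1 + γ * β)) * z 0,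
      (1 - α + α * (1 - γ * σ) / (1 + γ * σ)) * z 1] := by
    intro z; rw [hT]; ext i; fin_cases i <;> simp [hRf'] <;> ring
  refine ⟨⟨?_, ?_⟩, fun y => ⟨fun x => ?_, fun x hx => ?_⟩, hRf', hT', by simp [hRf'], ?_⟩
  · rw [hf']
    exact convexOn_diagQuadratic_sub_norm_sq fun i => by fin_cases i <;> simp [hβσ]
  · rw [hf']
    exact convexOn_norm_sq_sub_diagQuadratic fun i => by fin_cases i <;> simp [hβσ]
  · rw [hf', hpr']
    exact proxObjective_diagProx_le hd y x
  · rw [hf'] at hx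
    rw [hpr']
    exact eq_diagProx_of_proxObjective_le hd (hx _)
  · intro z hz₀ hz k
    have hline : ∀ t : ℝ, T (t • !₂[0, 1]) = ((1 - α + α * (1 - γ * σ) / (1 + γ * σ)) * t) • !₂[0, 1] := by
      intro t; rw [hT']; ext i; fin_cases i <;> simp
    rw [eq_pow_smul_of_map_smul hline hz₀ hz k, norm_smul, Real.norm_eq_abs, abs_pow]
    simp [EuclideanSpace.norm_eq]
end

section
/- Let β ≥ σ > 0 and γ > 0, and set δ := max((γβ − 1)/(γβ + 1), (1 − γσ)/(1 + γσ)). For every α ∈ (0, 2/(1+δ)) there exist: a function f : ℝ² → ℝ that is σ-strongly convex and β-smooth; a map q : ℝ² → ℝ² that is either the identity or the metric projection onto the closed convex set {0} (so that q is the proximal mapping of a proper closed convex function, namely g ≡ 0 or the indicator of {0}); an initial point z⁰ and a fixed point z̄ of R_g ∘ R_f with z⁰ ≠ z̄, where R_f := 2·prox_{γf} − Id and R_g := 2q − Id; such that the Douglas–Rachford iterates z^{k+1} = (1−α)z^k + α·R_g(R_f(z^k)) satisfy ‖z^k − z̄‖ = (|1 − α| + α·δ)^k · ‖z⁰ − z̄‖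 for all k ≥ 0. That is, the linear rate bound |1 − α| + αδ is attained exactly, so it is tight for the class of problems with σ-strongly convex, β-smooth f and convex g. -/
/-!
Take `f = (c/2)‖·‖²` with `c ∈ [σ, β]` and `g ≡ 0` or `g = ι_{0}`. Then `R_{γf}` is multiplication
by `λ_c = reflectionCoeff γ c`, `R_g` is multiplication by a sign `s = ±1`, and the Douglas–Rachford
iteration is `z ↦ (1 - α + α s λ_c) z`, with fixed point `0`. Since `δ = λ_σ` or `δ = -λ_β`, the signs
can be chosen so that `s λ_c = ±δ` with the sign making `|1 - α + α s λ_c| = |1 - α| + αδ`.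
-/

open Set

theorem exists_sign_abs_one_sub_add_mul_eq {δ : ℝ} (hδ₀ : 0 ≤ δ) (hδ₁ : δ < 1) (α : ℝ) :
    ∃ s : ℝ, (s = 1 ∨ s = -1) ∧ |1 - α + α * (s * δ)| = |1 - α| + α * δ := by
  rcases le_or_gt α 1 with hα | hα
  · refine ⟨1, Or.inl rfl, ?_⟩
    have : 0 ≤ 1 - α + α * δ := by
      nlinarith [mul_nonneg (sub_nonneg.2 hα) (sub_nonneg.2 hδ₁.le)]
    rw [one_mul, abs_of_nonneg this, abs_of_nonneg (sub_nonneg.2 hα)]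
  · refine ⟨-1, Or.inr rfl, ?_⟩
    have : 1 - α + α * (-1 * δ) < 0 := by nlinarith
    rw [abs_of_neg this, abs_of_neg (sub_neg.2 hα)]
    ring

noncomputable def reflectionCoeff (γ c : ℝ) : ℝ := (1 - γ * c) / (1 + γ * c)

section Coefficients

variable {β σ γ : ℝ}

theorem max_reflectionCoeff_mem_Ico (hσ : 0 < σ) (hβσ : σ ≤ β) (hγ : 0 < γ) :
    max ((γ * β - 1) / (γ * β + 1)) ((1 - γ * σ) / (1 + γ * σ)) ∈ Ico 0 1 := by
  have hγσ : 0 < γ * σ := mul_pos hγ hσ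
  have hγβ : γ * σ ≤ γ * β := mul_le_mul_of_nonneg_left hβσ hγ.le
  refine ⟨?_, max_lt ((div_lt_one (by linarith)).2 (by linarith))
    ((div_lt_one (by linarith)).2 (by linarith))⟩
  rcases le_or_gt (γ * σ) 1 with h | h
  · exact le_max_of_le_right (div_nonneg (by linarith) (by linarith))
  · exact le_max_of_le_left (div_nonneg (by linarith) (by linarith))

theorem exists_sign_mul_reflectionCoeff_eq_max (hβσ : σ ≤ β) :
    ∃ c, σ ≤ c ∧ c ≤ β ∧ ∃ s : ℝ, (s = 1 ∨ s = -1) ∧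
      s * reflectionCoeff γ c = max ((γ * β - 1) / (γ * β + 1)) ((1 - γ * σ) / (1 + γ * σ)) := by
  rcases le_total ((γ * β - 1) / (γ * β + 1)) ((1 - γ * σ) / (1 + γ * σ)) with h | h
  · exact ⟨σ, le_rfl, hβσ, 1, Or.inl rfl, by rw [one_mul, max_eq_right h, reflectionCoeff]⟩
  · exact ⟨β, hβσ, le_rfl, -1, Or.inr rfl, by rw [max_eq_left h, reflectionCoeff]; ring⟩

theorem exists_reflectionCoeff_sign_rate_eq (hσ : 0 < σ) (hβσ : σ ≤ β) (hγ : 0 < γ) (α : ℝ) :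
    ∃ c, σ ≤ c ∧ c ≤ β ∧ ∃ s : ℝ, (s = 1 ∨ s = -1) ∧
      |1 - α + α * (s * reflectionCoeff γ c)| =
        |1 - α| + α * max ((γ * β - 1) / (γ * β + 1)) ((1 - γ * σ) / (1 + γ * σ)) := by
  obtain ⟨c, hσc, hcβ, s₀, hs₀, hc⟩ := exists_sign_mul_reflectionCoeff_eq_max (γ := γ) hβσ
  obtain ⟨hδ₀, hδ₁⟩ := max_reflectionCoeff_mem_Ico hσ hβσ hγ
  obtain ⟨s₁, hs₁, hrate⟩ := exists_sign_abs_one_sub_add_mul_eq hδ₀ hδ₁ α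
  refine ⟨c, hσc, hcβ, s₁ * s₀, ?_, by rwa [mul_assoc, hc]⟩
  rcases hs₀ with rfl | rfl <;> rcases hs₁ with rfl | rfl <;> norm_num

end Coefficients

section Quadratic

variable {E : Type*}

theorem convexOn_univ_half_mul_norm_sq_sub [SeminormedAddCommGroup E] [NormedSpace ℝ E]
    {a b : ℝ} (hab : a ≤ b) :
    ConvexOn ℝ univ fun x : E => b / 2 * ‖x‖ ^ 2 - a / 2 * ‖x‖ ^ 2 := by
  refine (((convexOn_norm convex_univ).pow (fun x _ => norm_nonneg x) 2).smul
    (show 0 ≤ (b - a) / 2 by linarith)).congr fun x _ => ?_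
  simp only [smul_eq_mul, Pi.pow_apply]
  ring

variable [NormedAddCommGroup E] [InnerProductSpace ℝ E] {γ c : ℝ}

theorem quadratic_prox_objective_eq (h : 1 + γ * c ≠ 0) (x y : E) :
    γ * (c / 2 * ‖x‖ ^ 2) + 1 / 2 * ‖x - y‖ ^ 2 =
      γ * (c / 2 * ‖(1 + γ * c)⁻¹ • y‖ ^ 2) + 1 / 2 * ‖(1 + γ * c)⁻¹ • y - y‖ ^ 2
        + (1 + γ * c) / 2 * ‖x - (1 + γ * c)⁻¹ • y‖ ^ 2 := by
  obtain ⟨p, rfl⟩ : ∃ p : E, y = (1 + γ * c) • p :=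
    ⟨(1 + γ * c)⁻¹ • y, (smul_inv_smul₀ h y).symm⟩
  have hp : p - (1 + γ * c) • p = (-(γ * c)) • p := by module
  rw [inv_smul_smul₀ h, hp, norm_sub_sq_real, norm_sub_sq_real, norm_smul, norm_smul,
    real_inner_smul_right, Real.norm_eq_abs, Real.norm_eq_abs, mul_pow, mul_pow, sq_abs, sq_abs]
  ring

theorem quadratic_prox_le (h : 0 < 1 + γ * c) (x y : E) :
    γ * (c / 2 * ‖(1 + γ * c)⁻¹ • y‖ ^ 2) + 1 / 2 * ‖(1 + γ * c)⁻¹ • y - y‖ ^ 2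
      ≤ γ * (c / 2 * ‖x‖ ^ 2) + 1 / 2 * ‖x - y‖ ^ 2 := by
  rw [quadratic_prox_objective_eq h.ne' x y, le_add_iff_nonneg_right]
  positivity

theorem quadratic_reflection_eq (h : 1 + γ * c ≠ 0) (v : E) :
    (2 : ℝ) • ((1 + γ * c)⁻¹ • v) - v = reflectionCoeff γ c • v := by
  have hcoeff : 2 * (1 + γ * c)⁻¹ - 1 = reflectionCoeff γ c := by
    rw [reflectionCoeff]
    field_simp
    ring
  rw [smul_smul, ← hcoeff, sub_smul, one_smul]

end Quadratic

section Iteration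

variable {E : Type*} [SeminormedAddCommGroup E] [NormedSpace ℝ E]

theorem two_smul_half_one_add_smul_sub_self (s : ℝ) (v : E) :
    (2 : ℝ) • (((1 + s) / 2) • v) - v = s • v := by
  module

theorem norm_eq_abs_pow_mul_of_forall_succ_eq_smul {z : ℕ → E} {ρ : ℝ}
    (h : ∀ k, z (k + 1) = ρ • z k) (k : ℕ) : ‖z k‖ = |ρ| ^ k * ‖z 0‖ := by
  induction k with
  | zero => simp
  | succ k ih => rw [h, norm_smul, ih, Real.norm_eq_abs, pow_succ]; ring

end Iteration

theorem douglasRachford_rate_bound_tight_general (β σ γ δ α : ℝ)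
    (hσ : 0 < σ) (hβσ : σ ≤ β) (hγ : 0 < γ)
    (hδ : δ = max ((γ * β - 1) / (γ * β + 1)) ((1 - γ * σ) / (1 + γ * σ))) :
    ∃ (f : EuclideanSpace ℝ (Fin 2) → ℝ)
      (pf q : EuclideanSpace ℝ (Fin 2) → EuclideanSpace ℝ (Fin 2))
      (z0 zbar : EuclideanSpace ℝ (Fin 2)),
      -- f is σ-strongly convex and β-smooth
      ConvexOn ℝ Set.univ (fun x : EuclideanSpace ℝ (Fin 2) => f x - σ / 2 * ‖x‖ ^ 2)
      ∧ ConvexOn ℝ Set.univ (fun x : EuclideanSpace ℝ (Fin 2) => β / 2 * ‖x‖ ^ 2 - f x)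
      -- pf is the proximal operator prox_{γf}
      ∧ (∀ y x, γ * f (pf y) + (1 / 2) * ‖pf y - y‖ ^ 2 ≤ γ * f x + (1 / 2) * ‖x - y‖ ^ 2)
      -- q is the identity (prox of g ≡ 0) or the projection onto {0} (prox of ι_{{0}})
      ∧ (q = id ∨ q = fun _ => 0)
      -- z̄ is a fixed point of R_g ∘ R_f, where R_f = 2pf − Id and R_g = 2q − Id
      ∧ (fun x => (2 : ℝ) • q x - x) ((fun x => (2 : ℝ) • pf x - x) zbar) = zbar
      ∧ z0 ≠ zbar
      -- the Douglas–Rachford iterates attain the bound exactly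
      ∧ ∀ z : ℕ → EuclideanSpace ℝ (Fin 2), z 0 = z0 →
          (∀ k, z (k + 1) =
            (1 - α) • z k + α • ((2 : ℝ) • q ((2 : ℝ) • pf (z k) - z k) -
              ((2 : ℝ) • pf (z k) - z k))) →
          ∀ k, ‖z k - zbar‖ = (|1 - α| + α * δ) ^ k * ‖z0 - zbar‖ := by
  obtain ⟨c, hσc, hcβ, s, hs, hrate⟩ := exists_reflectionCoeff_sign_rate_eq hσ hβσ hγ α
  have hc : 0 < 1 + γ * c := add_pos one_pos (mul_pos hγ (hσ.trans_le hσc))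
  obtain ⟨z0, hz0⟩ := exists_ne (0 : EuclideanSpace ℝ (Fin 2))
  -- `q` is `id` for `s = 1` and `0` for `s = -1`; in both cases `2 q - Id = s • Id`.
  refine ⟨fun x => c / 2 * ‖x‖ ^ 2, fun y => (1 + γ * c)⁻¹ • y, fun w => ((1 + s) / 2) • w,
    z0, 0, convexOn_univ_half_mul_norm_sq_sub hσc, convexOn_univ_half_mul_norm_sq_sub hcβ,
    fun y x => quadratic_prox_le hc x y, ?_, by simp, hz0, ?_⟩
  · rcases hs with rfl | rfl
    · exact Or.inl (funext fun w => by norm_num)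
    · exact Or.inr (funext fun w => by norm_num)
  · intro z hz hrec k
    have hstep : ∀ k, z (k + 1) = (1 - α + α * (s * reflectionCoeff γ c)) • z k := by
      intro k
      rw [hrec, two_smul_half_one_add_smul_sub_self, quadratic_reflection_eq hc.ne']
      module
    rw [sub_zero, sub_zero, ← hz, norm_eq_abs_pow_mul_of_forall_succ_eq_smul hstep, hrate, hδ]

/-- Tightness of the Douglas–Rachford linear rate bound: for every admissible
relaxation `α ∈ (0, 2/(1+δ))` there is a `σ`-strongly convex, `β`-smooth `f` on ℝ²
and a proximal map `q` of either `g ≡ 0` (identity) or the indicator of `{0}`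
(projection, the zero map), together with a starting point `z⁰` and a fixed point `z̄`
of `R_g ∘ R_f` with `z⁰ ≠ z̄`, such that the Douglas–Rachford iterates attain the
rate `|1−α| + αδ` exactly. -/
theorem douglasRachford_rate_bound_tight (β σ γ δ α : ℝ)
    (hσ : 0 < σ) (hβσ : σ ≤ β) (hγ : 0 < γ)
    (hδ : δ = max ((γ * β - 1) / (γ * β + 1)) ((1 - γ * σ) / (1 + γ * σ)))
    (hα₁ : 0 < α) (hα₂ : α < 2 / (1 + δ)) :
    ∃ (f : EuclideanSpace ℝ (Fin 2) → ℝ)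
      (pf q : EuclideanSpace ℝ (Fin 2) → EuclideanSpace ℝ (Fin 2))
      (z0 zbar : EuclideanSpace ℝ (Fin 2)),
      -- f is σ-strongly convex and β-smooth
      ConvexOn ℝ Set.univ (fun x : EuclideanSpace ℝ (Fin 2) => f x - σ / 2 * ‖x‖ ^ 2)
      ∧ ConvexOn ℝ Set.univ (fun x : EuclideanSpace ℝ (Fin 2) => β / 2 * ‖x‖ ^ 2 - f x)
      -- pf is the proximal operator prox_{γf}
      ∧ (∀ y x, γ * f (pf y) + (1 / 2) * ‖pf y - y‖ ^ 2 ≤ γ * f x + (1 / 2) * ‖x - y‖ ^ 2)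
      -- q is the identity (prox of g ≡ 0) or the projection onto {0} (prox of ι_{{0}})
      ∧ (q = id ∨ q = fun _ => 0)
      -- z̄ is a fixed point of R_g ∘ R_f, where R_f = 2pf − Id and R_g = 2q − Id
      ∧ (fun x => (2 : ℝ) • q x - x) ((fun x => (2 : ℝ) • pf x - x) zbar) = zbar
      ∧ z0 ≠ zbar
      -- the Douglas–Rachford iterates attain the bound exactly
      ∧ ∀ z : ℕ → EuclideanSpace ℝ (Fin 2), z 0 = z0 →
          (∀ k, z (k + 1) =
            (1 - α) • z k + α • ((2 : ℝ) • q ((2 : ℝ) • pf (z k) - z k) -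
              ((2 : ℝ) • pf (z k) - z k))) →
          ∀ k, ‖z k - zbar‖ = (|1 - α| + α * δ) ^ k * ‖z0 - zbar‖ :=
  douglasRachford_rate_bound_tight_general β σ γ δ α hσ hβσ hγ hδ
end

section
/- Let H and K be real Hilbert spaces, β ≥ σ > 0, and let B : K → H be a bounded linear map for which there exist constants a ≥ θ > 0 with θ‖μ‖ ≤ ‖B μ‖ ≤ a‖μ‖ for all μ ∈ K (B plays the role of the adjoint A* of a surjective bounded linear operator A, with a = ‖A*‖). Let h : H → ℝ be differentiable with gradient ∇h that is (1/σ)-Lipschitz and (1/β)-strongly monotone (these are the properties of the convex conjugate f* of a σ-strongly convex, β-smooth function f), and let c ∈ K. Define d₁ : K → ℝ by d₁(μ) := h(−B μ) + ⟨c, μ⟩. Then d₁ is differentiable and its gradient ∇d₁ is (a²/σ)-Lipschitz and (θ²/β)-strongly monotone; equivalently, d₁ is (a²/σ)-smooth and (θ²/β)-strongly convex. -/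
open scoped RealInnerProductSpace

open InnerProductSpace ContinuousLinearMap

/-! The gradient of `d₁` is `μ ↦ (-B)† (∇h (-B μ)) + c`. Since `⟪L† u, μ⟫ = ⟪u, L μ⟫`, pulling a
gradient map back along a bounded operator `L` multiplies its Lipschitz constant by at most
`‖L‖²` and its strong-monotonicity modulus by at least `θ²`, where `θ` bounds `L` from below. -/

section Gradient

variable {𝕜 E F : Type*} [RCLike 𝕜]
  [NormedAddCommGroup E] [InnerProductSpace 𝕜 E] [CompleteSpace E]
  [NormedAddCommGroup F] [InnerProductSpace 𝕜 F] [CompleteSpace F]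

theorem HasGradientAt.add {f g : E → 𝕜} {f' g' x : E} (hf : HasGradientAt f f' x)
    (hg : HasGradientAt g g' x) : HasGradientAt (fun y => f y + g y) (f' + g') x := by
  rw [hasGradientAt_iff_hasFDerivAt, map_add]
  exact hf.hasFDerivAt.add hg.hasFDerivAt

theorem hasGradientAt_inner_left (c x : E) : HasGradientAt (fun y => inner 𝕜 c y) c x := by
  rw [hasGradientAt_iff_hasFDerivAt]
  exact (innerSL 𝕜 c).hasFDerivAt

theorem HasGradientAt.comp_continuousLinearMap {f : F → 𝕜} {g : F} (L : E →L[𝕜] F) {x : E}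
    (hf : HasGradientAt f g (L x)) : HasGradientAt (f ∘ L) (adjoint L g) x := by
  rw [hasGradientAt_iff_hasFDerivAt]
  refine (hf.hasFDerivAt.comp x L.hasFDerivAt).congr_fderiv (ext fun v => ?_)
  simp [toDual_apply_apply, adjoint_inner_left]

end Gradient

section Pullback

variable {H K : Type*} [NormedAddCommGroup H] [InnerProductSpace ℝ H] [CompleteSpace H]
  [NormedAddCommGroup K] [InnerProductSpace ℝ K] [CompleteSpace K]
  (L : K →L[ℝ] H) (G : H → H)

theorem norm_adjoint_comp_sub_le {a l : ℝ} (hL : ‖L‖ ≤ a) (hl : 0 ≤ l)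
    (hG : ∀ x y, ‖G x - G y‖ ≤ l * ‖x - y‖) (μ ν : K) :
    ‖adjoint L (G (L μ)) - adjoint L (G (L ν))‖ ≤ a ^ 2 * l * ‖μ - ν‖ := by
  have ha : 0 ≤ a := (norm_nonneg L).trans hL
  have hLμν : ‖L μ - L ν‖ ≤ a * ‖μ - ν‖ := by
    rw [← map_sub]
    exact (L.le_opNorm _).trans (mul_le_mul_of_nonneg_right hL (norm_nonneg _))
  calc ‖adjoint L (G (L μ)) - adjoint L (G (L ν))‖
      = ‖adjoint L (G (L μ) - G (L ν))‖ := by rw [map_sub]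
    _ ≤ a * ‖G (L μ) - G (L ν)‖ := by
        refine ((adjoint L).le_opNorm _).trans (mul_le_mul_of_nonneg_right ?_ (norm_nonneg _))
        rwa [LinearIsometryEquiv.norm_map]
    _ ≤ a * (l * (a * ‖μ - ν‖)) := by gcongr; exact (hG _ _).trans (by gcongr)
    _ = a ^ 2 * l * ‖μ - ν‖ := by ring

theorem inner_adjoint_comp_sub_ge {θ m : ℝ} (hθ : 0 ≤ θ) (hm : 0 ≤ m)
    (hlow : ∀ μ, θ * ‖μ‖ ≤ ‖L μ‖) (hG : ∀ x y, ⟪G x - G y, x - y⟫ ≥ m * ‖x - y‖ ^ 2)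
    (μ ν : K) :
    ⟪adjoint L (G (L μ)) - adjoint L (G (L ν)), μ - ν⟫ ≥ θ ^ 2 * m * ‖μ - ν‖ ^ 2 := by
  have hpull : ⟪adjoint L (G (L μ)) - adjoint L (G (L ν)), μ - ν⟫
      = ⟪G (L μ) - G (L ν), L μ - L ν⟫ := by
    rw [← map_sub, adjoint_inner_left, map_sub]
  have hsq : (θ * ‖μ - ν‖) ^ 2 ≤ ‖L μ - L ν‖ ^ 2 := by
    rw [← map_sub]
    exact pow_le_pow_left₀ (by positivity) (hlow _) 2
  calc θ ^ 2 * m * ‖μ - ν‖ ^ 2 = m * (θ * ‖μ - ν‖) ^ 2 := by ring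
    _ ≤ m * ‖L μ - L ν‖ ^ 2 := by gcongr
    _ ≤ _ := by rw [hpull]; exact hG _ _

end Pullback

/-- Smoothness and strong convexity of the dual function
`d₁(μ) = f*(−A*μ) + ⟨c, μ⟩`: if `∇h` is `(1/σ)`-Lipschitz and `(1/β)`-strongly
monotone and `θ‖μ‖ ≤ ‖Bμ‖ ≤ a‖μ‖`, then `d₁(μ) = h(−Bμ) + ⟨c, μ⟩` has an
`(a²/σ)`-Lipschitz and `(θ²/β)`-strongly monotone gradient. -/
theorem dual_function_smooth_strongly_convex
    {H K : Type*} [NormedAddCommGroup H] [InnerProductSpace ℝ H] [CompleteSpace H]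
    [NormedAddCommGroup K] [InnerProductSpace ℝ K] [CompleteSpace K]
    (β σ θ a : ℝ) (hσ : 0 < σ) (hβσ : σ ≤ β) (hθ : 0 < θ) (hθa : θ ≤ a)
    (B : K →L[ℝ] H)
    (hlow : ∀ μ, θ * ‖μ‖ ≤ ‖B μ‖) (hup : ∀ μ, ‖B μ‖ ≤ a * ‖μ‖)
    (h : H → ℝ) (h' : H → H) (hh' : ∀ x, HasGradientAt h (h' x) x)
    (hLip : ∀ x y, ‖h' x - h' y‖ ≤ (1 / σ) * ‖x - y‖)
    (hmono : ∀ x y, ⟪h' x - h' y, x - y⟫ ≥ (1 / β) * ‖x - y‖ ^ 2)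
    (c : K) (d₁ : K → ℝ) (hd₁ : d₁ = fun μ => h (-(B μ)) + ⟪c, μ⟫) :
    ∃ d₁' : K → K,
      (∀ μ, HasGradientAt d₁ (d₁' μ) μ)
        ∧ (∀ μ ν, ‖d₁' μ - d₁' ν‖ ≤ (a ^ 2 / σ) * ‖μ - ν‖)
        ∧ (∀ μ ν, ⟪d₁' μ - d₁' ν, μ - ν⟫ ≥ (θ ^ 2 / β) * ‖μ - ν‖ ^ 2) := by
  have hβ : 0 < β := hσ.trans_le hβσ
  have hnegB : ‖-B‖ ≤ a := by rw [norm_neg]; exact B.opNorm_le_bound (hθ.le.trans hθa) hup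
  have hlow' : ∀ μ, θ * ‖μ‖ ≤ ‖(-B) μ‖ := by simpa using hlow
  refine ⟨fun μ => adjoint (-B) (h' ((-B) μ)) + c, fun μ => ?_, fun μ ν => ?_, fun μ ν => ?_⟩
  · subst hd₁
    exact ((hh' _).comp_continuousLinearMap (-B)).add (hasGradientAt_inner_left c μ)
  · rw [add_sub_add_right_eq_sub, div_eq_mul_one_div]
    exact norm_adjoint_comp_sub_le (-B) h' hnegB (by positivity) hLip μ ν
  · rw [add_sub_add_right_eq_sub, div_eq_mul_one_div]
    exact inner_adjoint_comp_sub_ge (-B) h' hθ.le (by positivity) hlow' hmono μ ν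
end

section
/- Let H be a real Hilbert space, γ > 0, β ≥ σ > 0, and let f : H → ℝ be differentiable, σ-strongly convex and β-smooth, with proximal operator p = prox_{γf} and reflected proximal operator R_f = 2p − Id. Let S : H → H be any nonexpansive map (in particular, S = R_{γg} for a convex continuous g). Then the composition S ∘ R_f is δ-contractive with δ := max((γβ − 1)/(γβ + 1), (1 − γσ)/(1 + γσ)): for all z₁, z₂ ∈ H, ‖S(R_f(z₁)) − S(R_f(z₂))‖ ≤ δ‖z₁ − z₂‖, and δ < 1. -/
/-!
Fermat's rule characterises the prox: `γ ∇f(p z) = z - p z`. Writing `w = p z₁ - p z₂` and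
`g = ∇f(p z₁) - ∇f(p z₂)`, this gives `z₁ - z₂ = w + γ g` and `R_f z₁ - R_f z₂ = w - γ g`.
Co-coercivity of the gradient of the convex, `(β - σ)`-smooth function `f - σ/2 ‖·‖²` yields
`⟪g - σ w, β w - g⟫ ≥ 0`. In the variables `w ± γ g` this says that `R_f z₁ - R_f z₂` lies in
the ball with diameter `[c_β (z₁ - z₂), c_σ (z₁ - z₂)]`, where `c_t = (1 - γt)/(1 + γt)`, and
every point of that ball has norm at most `max (-c_β) c_σ ‖z₁ - z₂‖ = δ ‖z₁ - z₂‖`.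
-/

open scoped RealInnerProductSpace

theorem le_mul_of_forall_two_mul_sub_mul_sq_mul_le {a b L : ℝ} (hL : 0 ≤ L)
    (h : ∀ t : ℝ, (2 * t - L * t ^ 2) * a ≤ b) : a ≤ L * b := by
  rcases hL.eq_or_lt with rfl | hL
  · by_contra! ha
    rw [zero_mul] at ha
    have hcancel : 2 * ((b + 1) / (2 * a)) * a = b + 1 := by field_simp
    have := h ((b + 1) / (2 * a))
    simp only [zero_mul, sub_zero, hcancel] at this
    linarith
  · have := h (1 / L)
    field_simp at this
    nlinarith

section InnerProductSpace

variable {H : Type*} [NormedAddCommGroup H] [InnerProductSpace ℝ H]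

theorem norm_sq_eq_norm_sq_add_inner_add_norm_sub_sq (x y : H) :
    ‖x‖ ^ 2 = ‖y‖ ^ 2 + 2 * ⟪y, x - y⟫ + ‖x - y‖ ^ 2 := by
  simpa using norm_add_sq_real y (x - y)

theorem two_mul_sub_mul_sq_mul_norm_sq_le_inner_of_convex_of_smooth {φ : H → ℝ} {φ' : H → H}
    {L : ℝ} (hconv : ∀ x y, φ y + ⟪φ' y, x - y⟫ ≤ φ x)
    (hsmooth : ∀ x y, φ x ≤ φ y + ⟪φ' y, x - y⟫ + L / 2 * ‖x - y‖ ^ 2) (u v : H) (t : ℝ) :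
    (2 * t - L * t ^ 2) * ‖φ' u - φ' v‖ ^ 2 ≤ ⟪φ' u - φ' v, u - v⟫ := by
  set d := φ' u - φ' v
  have c1 := hconv (v + t • d) u
  have c2 := hsmooth (v + t • d) v
  have c3 := hconv (u - t • d) v
  have c4 := hsmooth (u - t • d) u
  rw [show v + t • d - v = t • d by abel, norm_smul] at c2
  rw [show u - t • d - u = -(t • d) by abel, norm_neg, norm_smul] at c4
  rw [show v + t • d - u = t • d - (u - v) by abel, inner_sub_right] at c1
  rw [show u - t • d - v = (u - v) - t • d by abel, inner_sub_right] at c3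
  have hd : t * ⟪φ' u, d⟫ - t * ⟪φ' v, d⟫ = t * ‖d‖ ^ 2 := by
    rw [← mul_sub, ← inner_sub_left, real_inner_self_eq_norm_sq]
  have hw : ⟪φ' u, u - v⟫ - ⟪φ' v, u - v⟫ = ⟪d, u - v⟫ := (inner_sub_left _ _ _).symm
  simp only [inner_neg_right, real_inner_smul_right, Real.norm_eq_abs, mul_pow, sq_abs] at c1 c2 c3 c4
  linarith

theorem norm_sq_le_mul_inner_of_convex_of_smooth {φ : H → ℝ} {φ' : H → H}
    {L : ℝ} (hL : 0 ≤ L) (hconv : ∀ x y, φ y + ⟪φ' y, x - y⟫ ≤ φ x)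
    (hsmooth : ∀ x y, φ x ≤ φ y + ⟪φ' y, x - y⟫ + L / 2 * ‖x - y‖ ^ 2) (u v : H) :
    ‖φ' u - φ' v‖ ^ 2 ≤ L * ⟪φ' u - φ' v, u - v⟫ :=
  le_mul_of_forall_two_mul_sub_mul_sq_mul_le hL
    (two_mul_sub_mul_sq_mul_norm_sq_le_inner_of_convex_of_smooth hconv hsmooth u v)

theorem inner_sub_smul_smul_sub_nonneg_of_strongConvex_of_smooth {f : H → ℝ} {f' : H → H}
    {σ β : ℝ} (hσβ : σ ≤ β)
    (hsc : ∀ x y, f x ≥ f y + ⟪f' y, x - y⟫ + σ / 2 * ‖x - y‖ ^ 2)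
    (hsm : ∀ x y, f x ≤ f y + ⟪f' y, x - y⟫ + β / 2 * ‖x - y‖ ^ 2) (u v : H) :
    0 ≤ ⟪f' u - f' v - σ • (u - v), β • (u - v) - (f' u - f' v)⟫ := by
  have hφ := norm_sq_le_mul_inner_of_convex_of_smooth (φ := fun x => f x - σ / 2 * ‖x‖ ^ 2)
    (φ' := fun x => f' x - σ • x) (L := β - σ) (sub_nonneg.2 hσβ)
    (fun x y => by
      have := hsc x y
      rw [norm_sq_eq_norm_sq_add_inner_add_norm_sub_sq x y, inner_sub_left, real_inner_smul_left]
      linarith)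
    (fun x y => by
      have := hsm x y
      rw [norm_sq_eq_norm_sq_add_inner_add_norm_sub_sq x y, inner_sub_left, real_inner_smul_left]
      linarith) u v
  rw [show f' u - σ • u - (f' v - σ • v) = f' u - f' v - σ • (u - v) by module] at hφ
  rw [show β • (u - v) - (f' u - f' v) = (β - σ) • (u - v) - (f' u - f' v - σ • (u - v)) by module,
    inner_sub_right, real_inner_smul_right, real_inner_self_eq_norm_sq]
  linarith

theorem norm_two_smul_sub_add_le_of_inner_nonpos {y P Q : H} (h : ⟪y - P, y - Q⟫ ≤ 0) :
    ‖(2 : ℝ) • y - (P + Q)‖ ≤ ‖P - Q‖ := by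
  have key : ‖(2 : ℝ) • y - (P + Q)‖ ^ 2 = ‖P - Q‖ ^ 2 + 4 * ⟪y - P, y - Q⟫ := by
    have hsum := norm_add_sq_real (y - P) (y - Q)
    have hdiff := norm_sub_sq_real (y - P) (y - Q)
    rw [show (2 : ℝ) • y - (P + Q) = (y - P) + (y - Q) by module,
      show P - Q = (y - Q) - (y - P) by abel, norm_sub_rev]
    linarith
  exact le_of_sq_le_sq (by linarith) (norm_nonneg _)

theorem norm_le_max_neg_mul_of_inner_sub_smul_sub_smul_nonpos {x y : H} {p q : ℝ} (hqp : q ≤ p)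
    (h : ⟪y - p • x, y - q • x⟫ ≤ 0) :
    ‖y‖ ≤ max (-q) p * ‖x‖ := by
  have hball := norm_two_smul_sub_add_le_of_inner_nonpos h
  rw [← sub_smul, ← add_smul, norm_smul, Real.norm_eq_abs] at hball
  have htri := norm_sub_le_norm_sub_add_norm_sub ((2 : ℝ) • y) ((p + q) • x) 0
  have hsum : |p - q| + |p + q| ≤ 2 * max (-q) p := by
    rw [abs_of_nonneg (sub_nonneg.2 hqp)]
    cases abs_cases (p + q) <;> linarith [le_max_left (-q) p, le_max_right (-q) p]
  simp only [sub_zero, norm_smul, Real.norm_eq_abs, abs_two] at htri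
  linarith [mul_le_mul_of_nonneg_right hsum (norm_nonneg x)]

theorem inner_sub_smul_add_sub_smul_add_nonpos {w g : H} {γ σ β : ℝ} (hγ : 0 ≤ γ)
    (hσ : 0 < 1 + γ * σ) (hβ : 0 < 1 + γ * β) (h : 0 ≤ ⟪g - σ • w, β • w - g⟫) :
    ⟪(w - γ • g) - ((1 - γ * σ) / (1 + γ * σ)) • (w + γ • g),
      (w - γ • g) - ((1 - γ * β) / (1 + γ * β)) • (w + γ • g)⟫ ≤ 0 := by
  have hσ' : (w - γ • g) - ((1 - γ * σ) / (1 + γ * σ)) • (w + γ • g)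
      = (-(2 * γ / (1 + γ * σ))) • (g - σ • w) := by
    match_scalars <;> field_simp <;> ring
  have hβ' : (w - γ • g) - ((1 - γ * β) / (1 + γ * β)) • (w + γ • g)
      = (2 * γ / (1 + γ * β)) • (β • w - g) := by
    match_scalars <;> field_simp <;> ring
  rw [hσ', hβ', real_inner_smul_left, real_inner_smul_right]
  have : 0 ≤ 2 * γ / (1 + γ * σ) * (2 * γ / (1 + γ * β)) * ⟪g - σ • w, β • w - g⟫ := by
    positivity
  linarith

theorem smul_gradient_eq_sub_of_isMinOn_prox [CompleteSpace H] {f : H → ℝ} {g u y : H} {γ : ℝ}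
    (hf : HasGradientAt f g u)
    (hmin : ∀ x, γ * f u + 1 / 2 * ‖u - y‖ ^ 2 ≤ γ * f x + 1 / 2 * ‖x - y‖ ^ 2) :
    γ • g = y - u := by
  have hderiv := (hf.hasFDerivAt.const_mul γ).add
    (((hasFDerivAt_id u).sub_const y).norm_sq.const_mul (1 / 2 : ℝ))
  have hlocmin : IsLocalMin (fun x => γ * f x + 1 / 2 * ‖x - y‖ ^ 2) u :=
    Filter.Eventually.of_forall hmin
  have hzero := congrArg (fun L => L (γ • g + (u - y))) (hlocmin.hasFDerivAt_eq_zero hderiv)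
  simp only [id_eq, ContinuousLinearMap.comp_id, add_apply, smul_apply, zero_apply,
    InnerProductSpace.toDual_apply_apply, smul_eq_mul, coe_innerSL_apply, nsmul_eq_mul] at hzero
  have hnorm : ‖γ • g + (u - y)‖ ^ 2 = 0 := by
    rw [← real_inner_self_eq_norm_sq, inner_add_left, real_inner_smul_left]
    linarith
  have hsum : γ • g + (u - y) = 0 := by simpa using hnorm
  linear_combination (norm := module) hsum

end InnerProductSpace

/-- Composing any nonexpansive map `S` (e.g. `S = R_{γg}`) with the reflected proximal
operator `R_f = 2·prox_{γf} − Id` of a `σ`-strongly convex, `β`-smooth `f` yields a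
`δ`-contraction with `δ = max((γβ−1)/(γβ+1), (1−γσ)/(1+γσ)) < 1`. -/
theorem nonexpansive_comp_reflected_prox_contractive
    {H : Type*} [NormedAddCommGroup H] [InnerProductSpace ℝ H] [CompleteSpace H]
    (γ β σ : ℝ) (hγ : 0 < γ) (hσ : 0 < σ) (hβσ : σ ≤ β)
    (f : H → ℝ) (f' : H → H) (hf' : ∀ x, HasGradientAt f (f' x) x)
    (hsc : ∀ x y, f x ≥ f y + ⟪f' y, x - y⟫ + σ / 2 * ‖x - y‖ ^ 2)
    (hsm : ∀ x y, f x ≤ f y + ⟪f' y, x - y⟫ + β / 2 * ‖x - y‖ ^ 2)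
    (p : H → H)
    (hp : ∀ y x, γ * f (p y) + (1 / 2) * ‖p y - y‖ ^ 2 ≤ γ * f x + (1 / 2) * ‖x - y‖ ^ 2)
    (Rf : H → H) (hRf : Rf = fun x => (2 : ℝ) • p x - x)
    (S : H → H) (hS : ∀ x y, ‖S x - S y‖ ≤ ‖x - y‖)
    (δ : ℝ) (hδ : δ = max ((γ * β - 1) / (γ * β + 1)) ((1 - γ * σ) / (1 + γ * σ))) :
    (∀ z₁ z₂, ‖S (Rf z₁) - S (Rf z₂)‖ ≤ δ * ‖z₁ - z₂‖) ∧ δ < 1 := by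
  have hγσ : 0 < γ * σ := mul_pos hγ hσ
  have hγβ : γ * σ ≤ γ * β := mul_le_mul_of_nonneg_left hβσ hγ.le
  have hδ' : δ = max (-((1 - γ * β) / (1 + γ * β))) ((1 - γ * σ) / (1 + γ * σ)) := by
    rw [hδ]; ring_nf
  refine ⟨fun z₁ z₂ => (hS _ _).trans ?_, ?_⟩
  · have hopt : ∀ z, γ • f' (p z) = z - p z := fun z =>
      smul_gradient_eq_sub_of_isMinOn_prox (hf' (p z)) (hp z)
    have hx : z₁ - z₂ = (p z₁ - p z₂) + γ • (f' (p z₁) - f' (p z₂)) := by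
      rw [smul_sub, hopt, hopt]; abel
    have hy : Rf z₁ - Rf z₂ = (p z₁ - p z₂) - γ • (f' (p z₁) - f' (p z₂)) := by
      rw [hRf, smul_sub, hopt, hopt]; module
    have hcoco := inner_sub_smul_smul_sub_nonneg_of_strongConvex_of_smooth hβσ hsc hsm (p z₁) (p z₂)
    have hmono : (1 - γ * β) / (1 + γ * β) ≤ (1 - γ * σ) / (1 + γ * σ) := by
      rw [div_le_div_iff₀ (by linarith) (by linarith)]; linarith
    rw [hx, hy, hδ']
    exact norm_le_max_neg_mul_of_inner_sub_smul_sub_smul_nonpos hmono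
      (inner_sub_smul_add_sub_smul_add_nonpos hγ.le (by linarith) (by linarith) hcoco)
  · rw [hδ]
    refine max_lt ?_ ?_ <;> rw [div_lt_one (by linarith)] <;> linarith
end
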